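/- arXiv:2212.11250 — 11 statements merged into one kernel-verified Lean document; each statement's English description precedes it below -/
import Mathlib

section
/- For every natural number n, the number of transfer systems on [n] equals the n-th Catalan number Cat(n) = C(2n, n)/(n + 1). -/
/-- A transfer system on `[n] = {1, …, n}`, encoded as a relation on `ℕ`
supported on pairs `1 ≤ i ≤ j ≤ n`: reflexive on `{1, …, n}`, transitive,
contained in `≤`, and closed under restriction. For `n = 0` this forces the
empty relation. -/
def IsTransferSystem (n : ℕ) (R : ℕ → ℕ → Prop) : Prop :=
  (∀ i, 1 ≤ i → i ≤ n → R i i) ∧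
  (∀ i j k, R i j → R j k → R i k) ∧
  (∀ i j, R i j → 1 ≤ i ∧ i ≤ j ∧ j ≤ n) ∧
  (∀ i j k, R i j → i ≤ k → k ≤ j → R i k)

/-- `(O_a, O_m)` is compatible: whenever `i →_{O_m} j` and `i ≤ k ≤ j`, then `k →_{O_a} j`. -/
def Compatible (Ra Rm : ℕ → ℕ → Prop) : Prop :=
  ∀ i j k, Rm i j → i ≤ k → k ≤ j → Ra k j

/-- Concatenation `O_L ⊕ O_R` of a transfer system on `[k]` with one on `[n-k]`. -/
def concatTS (k : ℕ) (RL RR : ℕ → ℕ → Prop) : ℕ → ℕ → Prop :=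
  fun i j => (j ≤ k ∧ RL i j) ∨ (k + 1 ≤ i ∧ RR (i - k) (j - k))

/-- The restriction `i_k^* O` to `[k]`. -/
def restrictTS (k : ℕ) (R : ℕ → ℕ → Prop) : ℕ → ℕ → Prop :=
  fun i j => j ≤ k ∧ R i j

/-- The geometric fixed points `Φ^k O`, a relation on `[n - k]`. -/
def gfpTS (k : ℕ) (R : ℕ → ℕ → Prop) : ℕ → ℕ → Prop :=
  fun i j => 1 ≤ i ∧ R (i + k) (j + k)

/-- The wrapping `w(O)` of a transfer system on `[n]`, a transfer system on `[n+1]`: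
`i → j` iff `i = 1` (and `j` is in range) or `2 ≤ i ≤ j` and `(i-1) →_O (j-1)`. -/
def wrapTS (n : ℕ) (R : ℕ → ℕ → Prop) : ℕ → ℕ → Prop :=
  fun i j => (i = 1 ∧ 1 ≤ j ∧ j ≤ n + 1) ∨ (2 ≤ i ∧ i ≤ j ∧ R (i - 1) (j - 1))

/-- The complete transfer system on `[n]`. -/
def completeTS (n : ℕ) : ℕ → ℕ → Prop :=
  fun i j => 1 ≤ i ∧ i ≤ j ∧ j ≤ n

/-- The concatenation `O_{k_1}^cpt ⊕ … ⊕ O_{k_r}^cpt` of complete transfer systems. -/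
def concatCompletes : List ℕ → (ℕ → ℕ → Prop)
  | [] => fun _ _ => False
  | k :: L => concatTS k (completeTS k) (concatCompletes L)

/-- A transfer system on `[n]` is saturated if it is a concatenation of complete
transfer systems `O_{k_1}^cpt ⊕ … ⊕ O_{k_r}^cpt` with the `k_i` positive and summing to `n`. -/
def IsSaturated (n : ℕ) (R : ℕ → ℕ → Prop) : Prop :=
  ∃ L : List ℕ, (∀ k ∈ L, 0 < k) ∧ L.sum = n ∧ R = concatCompletes L

/-- The core of a transfer system on `[n]`: `i → j` iff `m →_O (m+1)` for every
`i ≤ m < j` (for `i, j` in range). -/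
def coreTS (n : ℕ) (R : ℕ → ℕ → Prop) : ℕ → ℕ → Prop :=
  fun i j => 1 ≤ i ∧ i ≤ j ∧ j ≤ n ∧ ∀ m, i ≤ m → m < j → R m (m + 1)

/-- `wpow m i R` is the `i`-fold wrapping `w^i(R)` of a transfer system `R` on `[m]`,
a transfer system on `[m + i]`. -/
def wpow (m : ℕ) : ℕ → (ℕ → ℕ → Prop) → (ℕ → ℕ → Prop)
  | 0, R => R
  | i + 1, R => wrapTS (m + i) (wpow m i R)

/-- Interval-endpoint encoding of a transfer system: `f i` is the largest `j`
(0-indexed) such that `(i+1) → (j+1)`. -/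
def IsTF (n : ℕ) (f : ℕ → ℕ) : Prop :=
  (∀ i, i < n → i ≤ f i ∧ f i < n) ∧
  (∀ i j, i < n → i ≤ j → j ≤ f i → f j ≤ f i) ∧
  (∀ i, n ≤ i → f i = 0)

def TF (n : ℕ) : Type := {f : ℕ → ℕ // IsTF n f}

instance (n : ℕ) : Finite (TF n) := by
  apply Finite.of_injective
    (fun f : TF n => (fun i : Fin n => (⟨f.1 i, (f.2.1 i i.2).2⟩ : Fin n)))
  intro f g h
  apply Subtype.ext; funext i
  by_cases hi : i < n
  · exact congrArg Fin.val (congrFun h ⟨i, hi⟩)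
  · rw [f.2.2.2 i (le_of_not_gt hi), g.2.2.2 i (le_of_not_gt hi)]

open Classical in
noncomputable def tsFun (n : ℕ) (R : ℕ → ℕ → Prop) : ℕ → ℕ :=
  fun i => if i < n then Nat.findGreatest (fun j => R (i+1) (j+1)) (n-1) else 0

open Classical in
lemma tsFun_iff {n : ℕ} {R : ℕ → ℕ → Prop} (hR : IsTransferSystem n R)
    {i : ℕ} (hi : i < n) (j : ℕ) :
    R (i+1) (j+1) ↔ (i ≤ j ∧ j ≤ tsFun n R i) := by
  obtain ⟨h1, h2, h3, h4⟩ := hR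
  have hin : i ≤ n - 1 := by omega
  have hPi : R (i+1) (i+1) := h1 (i+1) (by omega) (by omega)
  have hspec : R (i+1) (Nat.findGreatest (fun j => R (i+1) (j+1)) (n-1) + 1) :=
    Nat.findGreatest_spec (P := fun j => R (i+1) (j+1)) hin hPi
  constructor
  · intro h
    have hb := h3 _ _ h
    refine ⟨by omega, ?_⟩
    simp only [tsFun, if_pos hi]
    exact Nat.le_findGreatest (by omega) h
  · rintro ⟨hij, hjf⟩
    simp only [tsFun, if_pos hi] at hjf
    exact h4 _ _ _ hspec (by omega) (by omega)

open Classical in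
lemma tsFun_le {n : ℕ} (R : ℕ → ℕ → Prop) {i : ℕ} (hi : i < n) :
    tsFun n R i ≤ n - 1 := by
  simp only [tsFun, if_pos hi]
  exact Nat.findGreatest_le _

lemma isTF_tsFun {n : ℕ} {R : ℕ → ℕ → Prop} (hR : IsTransferSystem n R) :
    IsTF n (tsFun n R) := by
  have hb : ∀ i, i < n → i ≤ tsFun n R i ∧ tsFun n R i < n := by
    intro i hi
    have h := (tsFun_iff hR hi i).1 (hR.1 (i+1) (by omega) (by omega))
    have := tsFun_le R hi
    exact ⟨h.2, by omega⟩
  refine ⟨hb, ?_, fun i hi => by simp [tsFun, Nat.not_lt.2 hi]⟩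
  intro i j hi hij hjf
  have hjn : j < n := lt_of_le_of_lt hjf (hb i hi).2
  have hRij : R (i+1) (j+1) := (tsFun_iff hR hi j).2 ⟨hij, hjf⟩
  have hRj : R (j+1) (tsFun n R j + 1) :=
    (tsFun_iff hR hjn (tsFun n R j)).2 ⟨(hb j hjn).1, le_rfl⟩
  exact ((tsFun_iff hR hi (tsFun n R j)).1 (hR.2.1 _ _ _ hRij hRj)).2

def funRel (n : ℕ) (f : ℕ → ℕ) : ℕ → ℕ → Prop :=
  fun i j => 1 ≤ i ∧ i ≤ j ∧ j ≤ n ∧ j ≤ f (i-1) + 1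

lemma isTransfer_funRel {n : ℕ} {f : ℕ → ℕ} (hf : IsTF n f) :
    IsTransferSystem n (funRel n f) := by
  obtain ⟨hb, hm, hz⟩ := hf
  refine ⟨?_, ?_, ?_, ?_⟩
  · intro i h1 h2
    exact ⟨h1, le_rfl, h2, by have := (hb (i-1) (by omega)).1; omega⟩
  · rintro i j k ⟨hi1, hij, hjn, hjf⟩ ⟨hj1, hjk, hkn, hkf⟩
    refine ⟨hi1, by omega, hkn, ?_⟩
    have h := hm (i-1) (j-1) (by omega) (by omega) (by omega)
    omega
  · rintro i j ⟨h1, h2, h3, _⟩; exact ⟨h1, h2, h3⟩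
  · rintro i j k ⟨h1, h2, h3, h4⟩ hik hkj
    exact ⟨h1, hik, by omega, by omega⟩

open Classical in
noncomputable def equivA (n : ℕ) :
    {R : ℕ → ℕ → Prop // IsTransferSystem n R} ≃ TF n where
  toFun R := ⟨tsFun n R.1, isTF_tsFun R.2⟩
  invFun f := ⟨funRel n f.1, isTransfer_funRel f.2⟩
  left_inv := by
    rintro ⟨R, hR⟩
    apply Subtype.ext
    funext i j
    apply propext
    show funRel n (tsFun n R) i j ↔ R i j
    constructor
    · rintro ⟨h1, h2, h3, h4⟩
      have hi : i - 1 < n := by omega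
      have := (tsFun_iff hR hi (j-1)).2 ⟨by omega, by omega⟩
      rwa [Nat.sub_add_cancel h1, Nat.sub_add_cancel (h1.trans h2)] at this
    · intro h
      obtain ⟨h1, h2, h3⟩ := hR.2.2.1 _ _ h
      have hi : i - 1 < n := by omega
      have h' : R ((i-1)+1) ((j-1)+1) := by
        rwa [Nat.sub_add_cancel h1, Nat.sub_add_cancel (h1.trans h2)]
      have := ((tsFun_iff hR hi (j-1)).1 h').2
      exact ⟨h1, h2, h3, by omega⟩
  right_inv := by
    rintro ⟨f, hf⟩
    apply Subtype.ext
    funext i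
    by_cases hi : i < n
    · simp only [tsFun, if_pos hi]
      have hfb := hf.1 i hi
      have hP : funRel n f (i+1) (f i + 1) :=
        ⟨by omega, by omega, by omega, by simp⟩
      apply le_antisymm
      · have := Nat.findGreatest_spec (P := fun j => funRel n f (i+1) (j+1))
          (m := f i) (show f i ≤ n - 1 by omega) hP
        obtain ⟨_, _, _, h4⟩ := this
        simpa using h4
      · exact Nat.le_findGreatest (by omega) hP
    · simp only [tsFun, if_neg hi]
      exact (hf.2.2 i (by omega)).symm

def splitL (k : ℕ) (f : ℕ → ℕ) : ℕ → ℕ := fun i => if i < k then f (i+1) - 1 else 0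

def splitR (n k : ℕ) (f : ℕ → ℕ) : ℕ → ℕ :=
  fun i => if i < n - k then f (i+k+1) - (k+1) else 0

def joinF (n k : ℕ) (g h : ℕ → ℕ) : ℕ → ℕ :=
  fun i => if i = 0 then k else if i ≤ k then g (i-1) + 1
    else if i ≤ n then h (i-k-1) + k + 1 else 0

lemma isTF_splitL {n : ℕ} {f : ℕ → ℕ} (hf : IsTF (n+1) f) :
    IsTF (f 0) (splitL (f 0) f) := by
  obtain ⟨hb, hm, hz⟩ := hf
  have hk : f 0 < n + 1 := (hb 0 (by omega)).2
  have key : ∀ i, i < f 0 → i + 1 ≤ f (i+1) ∧ f (i+1) ≤ f 0 := by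
    intro i hi
    exact ⟨(hb (i+1) (by omega)).1, hm 0 (i+1) (by omega) (by omega) (by omega)⟩
  refine ⟨?_, ?_, fun i hi => by simp [splitL, Nat.not_lt.2 hi]⟩
  · intro i hi
    have := key i hi
    simp only [splitL, if_pos hi]
    omega
  · intro i j hi hij hjf
    have h1 := key i hi
    simp only [splitL, if_pos hi] at hjf
    have hj : j < f 0 := by omega
    have h2 := key j hj
    simp only [splitL, if_pos hi, if_pos hj]
    have := hm (i+1) (j+1) (by omega) (by omega) (by omega)
    omega

lemma isTF_splitR {n : ℕ} {f : ℕ → ℕ} (hf : IsTF (n+1) f) :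
    IsTF (n - f 0) (splitR n (f 0) f) := by
  obtain ⟨hb, hm, hz⟩ := hf
  have hk : f 0 < n + 1 := (hb 0 (by omega)).2
  have key : ∀ i, i < n - f 0 → i + f 0 + 1 ≤ f (i + f 0 + 1) ∧ f (i + f 0 + 1) ≤ n := by
    intro i hi
    have := hb (i + f 0 + 1) (by omega)
    omega
  refine ⟨?_, ?_, fun i hi => by simp [splitR, Nat.not_lt.2 hi]⟩
  · intro i hi
    have := key i hi
    simp only [splitR, if_pos hi]
    omega
  · intro i j hi hij hjf
    have h1 := key i hi
    simp only [splitR, if_pos hi] at hjf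
    have hj : j < n - f 0 := by omega
    have h2 := key j hj
    simp only [splitR, if_pos hi, if_pos hj]
    have := hm (i + f 0 + 1) (j + f 0 + 1) (by omega) (by omega) (by omega)
    omega

lemma isTF_joinF {n k : ℕ} {g h : ℕ → ℕ} (hk : k ≤ n)
    (hg : IsTF k g) (hh : IsTF (n-k) h) : IsTF (n+1) (joinF n k g h) := by
  obtain ⟨hgb, hgm, hgz⟩ := hg
  obtain ⟨hhb, hhm, hhz⟩ := hh
  have hval : ∀ i, i < n + 1 →
      (i = 0 ∧ joinF n k g h i = k) ∨
      (1 ≤ i ∧ i ≤ k ∧ joinF n k g h i = g (i-1) + 1 ∧ i ≤ g (i-1) + 1 ∧ g (i-1) + 1 ≤ k) ∨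
      (k + 1 ≤ i ∧ i ≤ n ∧ joinF n k g h i = h (i-k-1) + k + 1 ∧
        i ≤ h (i-k-1) + k + 1 ∧ h (i-k-1) + k + 1 ≤ n) := by
    intro i hi
    by_cases h0 : i = 0
    · exact Or.inl ⟨h0, by simp [joinF, h0]⟩
    by_cases h1 : i ≤ k
    · have := hgb (i-1) (by omega)
      exact Or.inr (Or.inl ⟨by omega, h1, by simp [joinF, h0, h1], by omega, by omega⟩)
    · have := hhb (i-k-1) (by omega)
      refine Or.inr (Or.inr ⟨by omega, by omega, ?_, by omega, by omega⟩)
      simp only [joinF, if_neg h0, if_neg h1, if_pos (show i ≤ n by omega)]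
  refine ⟨?_, ?_, ?_⟩
  · intro i hi
    rcases hval i hi with ⟨h0, he⟩ | ⟨_, _, he, hl, hu⟩ | ⟨_, _, he, hl, hu⟩ <;> omega
  · intro i j hi hij hjf
    rcases hval i hi with ⟨h0, he⟩ | ⟨hi1, hik, he, hil, hiu⟩ | ⟨hik, hin, he, hil, hiu⟩
    · -- i = 0, f i = k, j ≤ k
      rcases hval j (by omega) with ⟨h0', he'⟩ | ⟨_, _, he', _, hu'⟩ | ⟨hjk, _, _, _, _⟩ <;>
        omega
    · -- 1 ≤ i ≤ k
      have hjk : j ≤ k := by omega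
      rcases hval j (by omega) with ⟨h0', _⟩ | ⟨hj1, _, he', _, _⟩ | ⟨hjk', _, _, _, _⟩
      · omega
      · have := hgm (i-1) (j-1) (by omega) (by omega) (by omega)
        omega
      · omega
    · -- k+1 ≤ i ≤ n
      rcases hval j (by omega) with ⟨h0', _⟩ | ⟨_, hjk, _, _, _⟩ | ⟨hjk', _, he', _, _⟩
      · omega
      · omega
      · have := hhm (i-k-1) (j-k-1) (by omega) (by omega) (by omega)
        omega
  · intro i hi
    simp only [joinF, if_neg (show ¬ i = 0 by omega), if_neg (show ¬ i ≤ k by omega),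
      if_neg (show ¬ i ≤ n by omega)]

def equivB (n : ℕ) : TF (n+1) ≃ Σ k : Fin (n+1), TF k × TF (n - k) where
  toFun f := ⟨⟨f.1 0, (f.2.1 0 (Nat.succ_pos n)).2⟩,
    ⟨splitL (f.1 0) f.1, isTF_splitL f.2⟩, ⟨splitR n (f.1 0) f.1, isTF_splitR f.2⟩⟩
  invFun x := ⟨joinF n x.1.1 x.2.1.1 x.2.2.1,
    isTF_joinF (Nat.lt_succ_iff.1 x.1.2) x.2.1.2 x.2.2.2⟩
  left_inv := by
    rintro ⟨f, hf⟩
    apply Subtype.ext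
    funext i
    show joinF n (f 0) (splitL (f 0) f) (splitR n (f 0) f) i = f i
    obtain ⟨hb, hm, hz⟩ := hf
    have hk : f 0 < n + 1 := (hb 0 (by omega)).2
    by_cases h0 : i = 0
    · simp [joinF, h0]
    by_cases h1 : i ≤ f 0
    · have h2 := hb i (by omega)
      simp only [joinF, if_neg h0, if_pos h1, splitL, if_pos (show i - 1 < f 0 by omega)]
      have : i - 1 + 1 = i := by omega
      rw [this]
      omega
    by_cases h3 : i ≤ n
    · have h4 := hb i (by omega)
      simp only [joinF, if_neg h0, if_neg h1, if_pos h3, splitR,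
        if_pos (show i - f 0 - 1 < n - f 0 by omega)]
      have : i - f 0 - 1 + f 0 + 1 = i := by omega
      rw [this]
      omega
    · simp only [joinF, if_neg h0, if_neg h1, if_neg h3]
      exact (hz i (by omega)).symm
  right_inv := by
    rintro ⟨⟨k, hk⟩, ⟨g, hg⟩, ⟨h, hh⟩⟩
    have hkn : k ≤ n := by omega
    have hg' : IsTF k g := hg
    have hh' : IsTF (n - k) h := hh
    have h0 : joinF n k g h 0 = k := by simp [joinF]
    refine Sigma.ext (Fin.ext h0) ?_
    have hL : splitL (joinF n k g h 0) (joinF n k g h) = g := by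
      funext i
      rw [h0]
      by_cases hi : i < k
      · simp only [splitL, if_pos hi, joinF, if_neg (show ¬ i + 1 = 0 by omega),
          if_pos (show i + 1 ≤ k by omega)]
        simp
      · simp only [splitL, if_neg hi]
        exact (hg'.2.2 i (by omega)).symm
    have hR : splitR n (joinF n k g h 0) (joinF n k g h) = h := by
      funext i
      rw [h0]
      by_cases hi : i < n - k
      · simp only [splitR, if_pos hi, joinF, if_neg (show ¬ i + k + 1 = 0 by omega),
          if_neg (show ¬ i + k + 1 ≤ k by omega), if_pos (show i + k + 1 ≤ n by omega)]
        have : i + k + 1 - k - 1 = i := by omega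
        rw [this]
        omega
      · simp only [splitR, if_neg hi]
        exact (hh'.2.2 i (by omega)).symm
    exact heq_of_eq (Prod.ext (Subtype.ext hL) (Subtype.ext hR))

lemma card_sigmaTF (n : ℕ) :
    Nat.card (Σ k : Fin (n+1), TF k × TF (n - k)) =
      ∑ k : Fin (n+1), Nat.card (TF k) * Nat.card (TF (n - k)) := by
  letI : ∀ m : ℕ, Fintype (TF m) := fun m => Fintype.ofFinite _
  simp only [Nat.card_eq_fintype_card, Fintype.card_sigma, Fintype.card_prod]

instance : Unique (TF 0) where
  default := ⟨fun _ => 0,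
    ⟨fun i h => absurd h (Nat.not_lt_zero i),
     fun i _ h => absurd h (Nat.not_lt_zero i),
     fun _ _ => rfl⟩⟩
  uniq f := Subtype.ext (funext fun i => f.2.2.2 i (Nat.zero_le i))

lemma cardTF : ∀ n, Nat.card (TF n) = catalan n := by
  intro n
  induction n using Nat.strong_induction_on with
  | _ n ih =>
    match n with
    | 0 => rw [Nat.card_unique, catalan_zero]
    | m + 1 =>
      rw [Nat.card_congr (equivB m), card_sigmaTF, catalan_succ]
      refine Finset.sum_congr rfl fun k _ => ?_
      rw [ih k.val k.isLt, ih (m - k.val) (by omega)]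


/-- For every natural number `n`, the number of transfer systems on `[n]`
equals the `n`-th Catalan number. -/
theorem numTransferSystems_eq_catalan (n : ℕ) :
    Nat.card {R : ℕ → ℕ → Prop // IsTransferSystem n R} = catalan n := by
  rw [Nat.card_congr (equivA n)]
  exact cardTF n
end

section
/- For n ≥ 1, every transfer system O on [n] can be written uniquely as O = O_L ⊕ w(O_R), where O_L is a transfer system on [m] and O_R is a transfer system on [n − m − 1], for a unique 0 ≤ m ≤ n − 1 and unique such transfer systems O_L and O_R. -/
/-- For `n ≥ 1`, every transfer system on `[n]` decomposes uniquely as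
`O = O_L ⊕ w(O_R)` with `O_L` a transfer system on `[m]` and `O_R` one on `[n-m-1]`,
for a unique `0 ≤ m ≤ n - 1`. -/
theorem decomp_unique (n : ℕ) (hn : 1 ≤ n) (O : ℕ → ℕ → Prop)
    (hO : IsTransferSystem n O) :
    ∃! t : ℕ × (ℕ → ℕ → Prop) × (ℕ → ℕ → Prop),
      t.1 ≤ n - 1 ∧
      IsTransferSystem t.1 t.2.1 ∧
      IsTransferSystem (n - t.1 - 1) t.2.2 ∧
      O = concatTS t.1 t.2.1 (wrapTS (n - t.1 - 1) t.2.2) := by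
  obtain ⟨hrefl, htrans, hbd, hres⟩ := hO
  have hne : Set.Nonempty {i | O i n} := ⟨n, hrefl n hn le_rfl⟩
  set p := sInf {i | O i n} with hpdef
  have hpS : O p n := Nat.sInf_mem hne
  have hmin : ∀ i, O i n → p ≤ i := fun i hi => Nat.sInf_le hi
  have hp1 : 1 ≤ p := (hbd p n hpS).1
  have hpn : p ≤ n := (hbd p n hpS).2.1
  have hA : ∀ j, p ≤ j → j ≤ n → O p j := fun j h1 h2 => hres p n j hpS h1 h2
  have hB : ∀ i j, O i j → p ≤ j → p ≤ i := by
    intro i j hij hpj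
    by_contra hlt
    push_neg at hlt
    have h1 : O i p := hres i j p hij (le_of_lt hlt) hpj
    exact absurd (hmin i (htrans i p n h1 hpS)) (by omega)
  set m := p - 1 with hmdef
  set L := restrictTS m O with hLdef
  set R := gfpTS p O with hRdef
  have hLTS : IsTransferSystem m L := by
    refine ⟨fun i h1 h2 => ⟨h2, hrefl i h1 (by omega)⟩, ?_, ?_, ?_⟩
    · rintro i j k ⟨hj, hij⟩ ⟨hk, hjk⟩; exact ⟨hk, htrans i j k hij hjk⟩
    · rintro i j ⟨hj, hij⟩; obtain ⟨a, b, c⟩ := hbd i j hij; exact ⟨a, b, hj⟩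
    · rintro i j k ⟨hj, hij⟩ h1 h2; exact ⟨by omega, hres i j k hij h1 h2⟩
  have hRTS : IsTransferSystem (n - m - 1) R := by
    refine ⟨?_, ?_, ?_, ?_⟩
    · intro i h1 h2; exact ⟨h1, hrefl (i + p) (by omega) (by omega)⟩
    · rintro i j k ⟨hi, hij⟩ ⟨hj, hjk⟩; exact ⟨hi, htrans _ _ _ hij hjk⟩
    · rintro i j ⟨hi, hij⟩
      obtain ⟨a, b, c⟩ := hbd _ _ hij
      exact ⟨hi, by omega, by omega⟩
    · rintro i j k ⟨hi, hij⟩ h1 h2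
      exact ⟨hi, hres _ _ _ hij (by omega) (by omega)⟩
  have hchar : O = concatTS m L (wrapTS (n - m - 1) R) := by
    funext i j
    apply propext
    constructor
    · intro h
      obtain ⟨hi1, hij, hjn⟩ := hbd i j h
      by_cases hj : j ≤ m
      · exact Or.inl ⟨hj, hj, h⟩
      · have hpj : p ≤ j := by omega
        have hpi : p ≤ i := hB i j h hpj
        refine Or.inr ⟨by omega, ?_⟩
        by_cases hip : i = p
        · exact Or.inl ⟨by omega, by omega, by omega⟩
        · refine Or.inr ⟨by omega, by omega, ⟨by omega, ?_⟩⟩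
          have e1 : i - m - 1 + p = i := by omega
          have e2 : j - m - 1 + p = j := by omega
          rw [e1, e2]; exact h
    · intro h
      rcases h with ⟨hj, hjm, hOij⟩ | ⟨hge, hw⟩
      · exact hOij
      · rcases hw with ⟨h1, h2, h3⟩ | ⟨h1, h2, ha, h3⟩
        · have : i = p := by omega
          subst this
          exact hA j (by omega) (by omega)
        · have e1 : i - m - 1 + p = i := by omega
          have e2 : j - m - 1 + p = j := by omega
          rwa [e1, e2] at h3
  refine ⟨(m, L, R), ⟨by omega, hLTS, hRTS, hchar⟩, ?_⟩
  rintro ⟨m', L', R'⟩ ⟨hm', hL', hR', heq⟩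
  simp only at hm' hL' hR' heq
  have h1 : O (m' + 1) n := by
    rw [heq]
    exact Or.inr ⟨le_rfl, Or.inl ⟨by omega, by omega, by omega⟩⟩
  have h2 : ∀ i, O i n → m' + 1 ≤ i := by
    intro i hi
    rw [heq] at hi
    rcases hi with ⟨hle, _⟩ | ⟨hge, _⟩
    · omega
    · exact hge
  have hm'm : m' = m := by
    have e1 := hmin (m' + 1) h1
    have e2 := h2 p hpS
    omega
  subst hm'm
  have hLL : L' = L := by
    funext i j; apply propext
    constructor
    · intro h
      obtain ⟨_, _, hjm⟩ := hL'.2.2.1 i j h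
      exact ⟨hjm, by rw [heq]; exact Or.inl ⟨hjm, h⟩⟩
    · rintro ⟨hjm, hOij⟩
      rw [heq] at hOij
      rcases hOij with ⟨_, h⟩ | ⟨hge, hw⟩
      · exact h
      · rcases hw with ⟨w1, w2, _⟩ | ⟨w1, w2, _⟩ <;> omega
  have hRR : R' = R := by
    funext a b; apply propext
    constructor
    · intro h
      obtain ⟨ha, hab, hbn⟩ := hR'.2.2.1 a b h
      refine ⟨by omega, ?_⟩
      rw [heq]
      refine Or.inr ⟨by omega, Or.inr ⟨by omega, by omega, ?_⟩⟩
      have e1 : a + p - m - 1 = a := by omega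
      have e2 : b + p - m - 1 = b := by omega
      rw [e1, e2]; exact h
    · rintro ⟨ha, hO'⟩
      rw [heq] at hO'
      rcases hO' with ⟨hle, _⟩ | ⟨hge, hw⟩
      · omega
      · rcases hw with ⟨w1, _, _⟩ | ⟨w1, w2, w3⟩
        · omega
        · have e1 : a + p - m - 1 = a := by omega
          have e2 : b + p - m - 1 = b := by omega
          rwa [e1, e2] at w3
  rw [hLL, hRR]
end

section
/- For n ≥ 1, every transfer system O on [n] can be written uniquely as O = w(O_1) ⊕ w(O_2) ⊕ … ⊕ w(O_k) for some k ≥ 1 and some transfer systems O_1, …, O_k (on [m_1], …, [m_k] with (m_1 + 1) + … + (m_k + 1) = n); the number k and the sequence O_1, …, O_k are uniquely determined by O. -/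
/-- The concatenation `w(O_1) ⊕ w(O_2) ⊕ … ⊕ w(O_k)` of the wrappings of a list of
transfer systems (each entry `(m, O)` with `O` a transfer system on `[m]`). -/
def concatWraps : List (ℕ × (ℕ → ℕ → Prop)) → (ℕ → ℕ → Prop)
  | [] => fun _ _ => False
  | p :: L => concatTS (p.1 + 1) (wrapTS p.1 p.2) (concatWraps L)

open Classical in
private lemma wrapB {m : ℕ} {R : ℕ → ℕ → Prop} {i j : ℕ}
    (hR : IsTransferSystem m R) (h : wrapTS m R i j) : 1 ≤ i ∧ i ≤ j ∧ j ≤ m + 1 := by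
  rcases h with ⟨h1, h2, h3⟩ | ⟨h1, h2, h3⟩
  · omega
  · have := hR.2.2.1 _ _ h3; omega

private lemma cwB : ∀ L : List (ℕ × (ℕ → ℕ → Prop)),
    (∀ p ∈ L, IsTransferSystem p.1 p.2) →
    ∀ i j, concatWraps L i j → 1 ≤ i ∧ i ≤ j ∧ j ≤ (L.map (fun p => p.1 + 1)).sum
  | [], _, i, j, h => h.elim
  | (m, R) :: L, hTS, i, j, h => by
    simp only [List.map_cons, List.sum_cons]
    rcases h with ⟨hj, hw⟩ | ⟨hi, ht⟩
    · have := wrapB (hTS (m, R) (by simp)) hw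
      omega
    · have := cwB L (fun p hp => hTS p (by simp [hp])) _ _ ht
      omega

private lemma cwHeadSelf (m : ℕ) (R : ℕ → ℕ → Prop) (L : List (ℕ × (ℕ → ℕ → Prop))) :
    concatWraps ((m, R) :: L) 1 (m + 1) :=
  Or.inl ⟨le_rfl, Or.inl ⟨rfl, by omega, le_rfl⟩⟩

private lemma cwHeadLe {m : ℕ} {R : ℕ → ℕ → Prop} {L : List (ℕ × (ℕ → ℕ → Prop))} {j : ℕ}
    (h : concatWraps ((m, R) :: L) 1 j) : j ≤ m + 1 := by
  rcases h with ⟨hj, _⟩ | ⟨hi, _⟩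
  · exact hj
  · omega

private lemma cwEntry {m : ℕ} {R : ℕ → ℕ → Prop} {L : List (ℕ × (ℕ → ℕ → Prop))} {i j : ℕ}
    (hb : 1 ≤ i ∧ i ≤ j ∧ j ≤ m) :
    R i j ↔ concatWraps ((m, R) :: L) (i + 1) (j + 1) := by
  constructor
  · intro h
    refine Or.inl ⟨by omega, Or.inr ⟨by omega, by omega, ?_⟩⟩
    simpa using h
  · intro h
    rcases h with ⟨hj, hw⟩ | ⟨hi, _⟩
    · rcases hw with ⟨h1, _, _⟩ | ⟨_, _, h3⟩
      · omega
      · simpa using h3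
    · omega

private lemma cwTail {m : ℕ} {R : ℕ → ℕ → Prop} {L : List (ℕ × (ℕ → ℕ → Prop))}
    (hL : ∀ p ∈ L, IsTransferSystem p.1 p.2) (i j : ℕ) :
    concatWraps L i j ↔ (1 ≤ i ∧ concatWraps ((m, R) :: L) (i + (m + 1)) (j + (m + 1))) := by
  constructor
  · intro h
    have hb := cwB L hL _ _ h
    refine ⟨hb.1, Or.inr ⟨by omega, ?_⟩⟩
    simpa using h
  · rintro ⟨hi, h⟩
    rcases h with ⟨hj, hw⟩ | ⟨_, ht⟩
    · rcases hw with ⟨h1, _, _⟩ | ⟨h1, h2, _⟩ <;> omega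
    · simpa using ht

private lemma cwInj : ∀ L1 L2 : List (ℕ × (ℕ → ℕ → Prop)),
    (∀ p ∈ L1, IsTransferSystem p.1 p.2) → (∀ p ∈ L2, IsTransferSystem p.1 p.2) →
    concatWraps L1 = concatWraps L2 → L1 = L2 := by
  intro L1
  induction L1 with
  | nil =>
    intro L2 _ _ h
    cases L2 with
    | nil => rfl
    | cons p L2 =>
      obtain ⟨m, R⟩ := p
      have := cwHeadSelf m R L2
      rw [← h] at this
      exact this.elim
  | cons p L1 ih =>
    intro L2 h1 h2 heq
    obtain ⟨m1, R1⟩ := p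
    cases L2 with
    | nil =>
      have := cwHeadSelf m1 R1 L1
      rw [heq] at this
      exact this.elim
    | cons q L2 =>
      obtain ⟨m2, R2⟩ := q
      have hTS1 : IsTransferSystem m1 R1 := h1 (m1, R1) (by simp)
      have hTS2 : IsTransferSystem m2 R2 := h2 (m2, R2) (by simp)
      have hL1 : ∀ p ∈ L1, IsTransferSystem p.1 p.2 := fun p hp => h1 p (by simp [hp])
      have hL2 : ∀ p ∈ L2, IsTransferSystem p.1 p.2 := fun p hp => h2 p (by simp [hp])
      have hm12 : m1 + 1 ≤ m2 + 1 := by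
        have := cwHeadSelf m1 R1 L1
        rw [heq] at this
        exact cwHeadLe this
      have hm21 : m2 + 1 ≤ m1 + 1 := by
        have := cwHeadSelf m2 R2 L2
        rw [← heq] at this
        exact cwHeadLe this
      have hm : m1 = m2 := by omega
      subst hm
      have hR : R1 = R2 := by
        funext i j
        apply propext
        constructor
        · intro h
          have hb := hTS1.2.2.1 _ _ h
          exact (cwEntry (L := L2) hb).2 (heq ▸ (cwEntry (L := L1) hb).1 h)
        · intro h
          have hb := hTS2.2.2.1 _ _ h
          exact (cwEntry (L := L1) hb).2 (heq ▸ (cwEntry (L := L2) hb).1 h)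
      subst hR
      have hT : concatWraps L1 = concatWraps L2 := by
        funext i j
        apply propext
        rw [cwTail (m := m1) (R := R1) hL1 i j, cwTail (m := m1) (R := R1) hL2 i j, heq]
      rw [ih L2 hL1 hL2 hT]

open Classical in
private lemma cwExists (n : ℕ) : 1 ≤ n → ∀ O : ℕ → ℕ → Prop, IsTransferSystem n O →
    ∃ L : List (ℕ × (ℕ → ℕ → Prop)), L ≠ [] ∧ (∀ p ∈ L, IsTransferSystem p.1 p.2) ∧
      (L.map (fun p => p.1 + 1)).sum = n ∧ O = concatWraps L := by
  induction n using Nat.strong_induction_on with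
  | _ n IH =>
  intro hn O hO
  obtain ⟨hrefl, htrans, hbd, hres⟩ := hO
  set k := Nat.findGreatest (O 1) n with hk
  have hO11 : O 1 1 := hrefl 1 le_rfl hn
  have hk1 : 1 ≤ k := Nat.le_findGreatest hn hO11
  have hkn : k ≤ n := Nat.findGreatest_le n
  have hO1k : O 1 k := Nat.findGreatest_spec hn hO11
  have hmax : ∀ j, O 1 j → j ≤ k := by
    intro j hj
    by_contra hc
    exact Nat.findGreatest_is_greatest (by omega) (hbd _ _ hj).2.2 hj
  have hcross : ∀ i j, O i j → i ≤ k → ¬ (k < j) := by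
    intro i j hij hik hkj
    have hb := hbd _ _ hij
    have h1i : O 1 i := hres 1 k i hO1k hb.1 hik
    exact absurd (hmax j (htrans 1 i j h1i hij)) (by omega)
  set R1 : ℕ → ℕ → Prop := fun i j => 1 ≤ i ∧ i ≤ j ∧ j + 1 ≤ k ∧ O (i + 1) (j + 1) with hR1def
  have hR1 : IsTransferSystem (k - 1) R1 := by
    refine ⟨?_, ?_, ?_, ?_⟩
    · intro i h1 h2
      exact ⟨h1, le_rfl, by omega, hrefl (i + 1) (by omega) (by omega)⟩
    · rintro i j l ⟨a1, a2, a3, a4⟩ ⟨b1, b2, b3, b4⟩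
      exact ⟨a1, by omega, b3, htrans _ _ _ a4 b4⟩
    · rintro i j ⟨a1, a2, a3, _⟩
      exact ⟨a1, a2, by omega⟩
    · rintro i j l ⟨a1, a2, a3, a4⟩ hil hlj
      exact ⟨a1, hil, by omega, hres _ _ _ a4 (by omega) (by omega)⟩
  set Rrest : ℕ → ℕ → Prop := fun i j => 1 ≤ i ∧ O (i + k) (j + k) with hRrestdef
  have hsplit : O = concatTS k (wrapTS (k - 1) R1) Rrest := by
    funext i j
    apply propext
    constructor
    · intro h
      have hb := hbd _ _ h
      by_cases hjk : j ≤ k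
      · refine Or.inl ⟨hjk, ?_⟩
        by_cases hi1 : i = 1
        · exact Or.inl ⟨hi1, by omega, by omega⟩
        · refine Or.inr ⟨by omega, by omega, ⟨by omega, by omega, by omega, ?_⟩⟩
          have e1 : i - 1 + 1 = i := by omega
          have e2 : j - 1 + 1 = j := by omega
          rw [e1, e2]; exact h
      · have hik : ¬ (i ≤ k) := fun hik => hcross i j h hik (by omega)
        refine Or.inr ⟨by omega, by omega, ?_⟩
        have e1 : i - k + k = i := by omega
        have e2 : j - k + k = j := by omega
        rw [e1, e2]; exact h
    · rintro (⟨hjk, hw⟩ | ⟨hik, h1, hrest⟩)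
      · rcases hw with ⟨hi1, hj1, _⟩ | ⟨hi2, hij, _, _, _, h4⟩
        · subst hi1; exact hres 1 k j hO1k hj1 hjk
        · have e1 : i - 1 + 1 = i := by omega
          have e2 : j - 1 + 1 = j := by omega
          rwa [e1, e2] at h4
      · have hb := hbd _ _ hrest
        have e1 : i - k + k = i := by omega
        have e2 : j - k + k = j := by omega
        rwa [e1, e2] at hrest
  have hwrapeq : ∀ T : ℕ → ℕ → Prop,
      concatWraps ((k - 1, R1) :: []) = concatTS k (wrapTS (k - 1) R1) (concatWraps []) := by
    intro _
    show concatTS (k - 1 + 1) _ _ = _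
    rw [Nat.sub_add_cancel hk1]
  by_cases hkeq : k = n
  · refine ⟨[(k - 1, R1)], by simp, by simpa using hR1, by simp; omega, ?_⟩
    have hre : Rrest = concatWraps [] := by
      funext i j
      apply propext
      constructor
      · rintro ⟨h1, h2⟩
        have hb := hbd _ _ h2
        omega
      · exact fun h => h.elim
    rw [hsplit, hre]
    exact (hwrapeq O).symm
  · have hRrest : IsTransferSystem (n - k) Rrest := by
      refine ⟨?_, ?_, ?_, ?_⟩
      · intro i h1 h2
        exact ⟨h1, hrefl (i + k) (by omega) (by omega)⟩
      · rintro i j l ⟨a1, a2⟩ ⟨b1, b2⟩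
        exact ⟨a1, htrans _ _ _ a2 b2⟩
      · rintro i j ⟨a1, a2⟩
        have hb := hbd _ _ a2
        exact ⟨a1, by omega, by omega⟩
      · rintro i j l ⟨a1, a2⟩ hil hlj
        exact ⟨a1, hres _ _ _ a2 (by omega) (by omega)⟩
    obtain ⟨L', hne', hTS', hsum', heq'⟩ := IH (n - k) (by omega) (by omega) Rrest hRrest
    refine ⟨(k - 1, R1) :: L', by simp, ?_, ?_, ?_⟩
    · intro p hp
      rcases List.mem_cons.1 hp with h | h
      · subst h; exact hR1
      · exact hTS' p h
    · simp only [List.map_cons, List.sum_cons]; omega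
    · rw [hsplit, heq']
      show _ = concatTS (k - 1 + 1) _ _
      rw [Nat.sub_add_cancel hk1]

/-- For `n ≥ 1`, every transfer system `O` on `[n]` is uniquely a
concatenation `w(O_1) ⊕ … ⊕ w(O_k)` of wrapped transfer systems, where `O_i` is a
transfer system on `[m_i]` and `(m_1 + 1) + … + (m_k + 1) = n`. -/
theorem full_decomp_unique (n : ℕ) (hn : 1 ≤ n) (O : ℕ → ℕ → Prop)
    (hO : IsTransferSystem n O) :
    ∃! L : List (ℕ × (ℕ → ℕ → Prop)),
      L ≠ [] ∧
      (∀ p ∈ L, IsTransferSystem p.1 p.2) ∧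
      (L.map (fun p => p.1 + 1)).sum = n ∧
      O = concatWraps L := by
  obtain ⟨L, hne, hTS, hsum, heq⟩ := cwExists n hn O hO
  refine ⟨L, ⟨hne, hTS, hsum, heq⟩, ?_⟩
  rintro L' ⟨_, hTS', _, heq'⟩
  exact cwInj L' L hTS' hTS (heq' ▸ heq)
end

section
/- For every transfer system O on [n] there exists a minimal saturated transfer system containing O: a saturated transfer system S on [n] with O ≤ S, such that S ≤ S' for every saturated transfer system S' on [n] with O ≤ S'. -/
/-- Nonempty-prefix sums of a list. -/
def prefsums : List ℕ → List ℕ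
  | [] => []
  | k :: L => k :: (prefsums L).map (k + ·)

lemma prefsums_pos : ∀ L : List ℕ, (∀ k ∈ L, 0 < k) → ∀ q ∈ prefsums L, 1 ≤ q := by
  intro L
  induction L with
  | nil => intro _ q hq; simp [prefsums] at hq
  | cons k L ih =>
    intro h q hq
    simp only [prefsums, List.mem_cons, List.mem_map] at hq
    have hk := h k List.mem_cons_self
    rcases hq with heq | ⟨q', _, heq⟩ <;> omega

lemma concatCompletes_iff : ∀ L : List ℕ, (∀ k ∈ L, 0 < k) → ∀ i j,
    concatCompletes L i j ↔
      (1 ≤ i ∧ i ≤ j ∧ j ≤ L.sum ∧ ∀ p ∈ prefsums L, ¬(i ≤ p ∧ p < j)) := by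
  intro L
  induction L with
  | nil =>
    intro _ i j
    simp only [concatCompletes, prefsums, List.not_mem_nil, List.sum_nil]
    constructor
    · intro h; exact h.elim
    · rintro ⟨h1, h2, h3, _⟩; omega
  | cons k L ih =>
    intro h i j
    have hk : 0 < k := h k (by simp)
    have hL : ∀ x ∈ L, 0 < x := fun x hx => h x (by simp [hx])
    have hq1 : ∀ q ∈ prefsums L, 1 ≤ q := prefsums_pos L hL
    simp only [concatCompletes, concatTS, completeTS, List.sum_cons]
    constructor
    · rintro (⟨hjk, h1, h2, h3⟩ | ⟨hki, hcc⟩)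
      · refine ⟨h1, h2, by omega, ?_⟩
        intro p hp
        simp only [prefsums, List.mem_cons, List.mem_map] at hp
        rcases hp with rfl | ⟨q, hq, rfl⟩
        · omega
        · have := hq1 q hq; omega
      · obtain ⟨h1, h2, h3, h4⟩ := (ih hL _ _).mp hcc
        refine ⟨by omega, by omega, by omega, ?_⟩
        intro p hp
        simp only [prefsums, List.mem_cons, List.mem_map] at hp
        rcases hp with rfl | ⟨q, hq, rfl⟩
        · omega
        · have := h4 q hq; omega
    · rintro ⟨h1, h2, h3, h4⟩
      by_cases hjk : j ≤ k
      · exact Or.inl ⟨hjk, h1, h2, hjk⟩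
      · right
        have hik : k + 1 ≤ i := by
          have := h4 k (by simp [prefsums])
          omega
        refine ⟨hik, (ih hL _ _).mpr ⟨by omega, by omega, by omega, ?_⟩⟩
        intro q hq
        have := h4 (k + q)
          (by simp only [prefsums, List.mem_cons, List.mem_map]; exact Or.inr ⟨q, hq, rfl⟩)
        omega

lemma exists_break_list : ∀ n : ℕ, 0 < n → ∀ B : ℕ → Prop,
    ∃ L : List ℕ, (∀ k ∈ L, 0 < k) ∧ L.sum = n ∧
      ∀ p, p ∈ prefsums L ↔ (p = n ∨ (1 ≤ p ∧ p < n ∧ B p)) := by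
  intro n
  induction n using Nat.strong_induction_on with
  | _ n ih =>
    intro hn B
    classical
    have hex : ∃ b, 1 ≤ b ∧ b ≤ n ∧ (b = n ∨ B b) := ⟨n, hn, le_refl n, Or.inl rfl⟩
    obtain ⟨hb1, hb2, hb3⟩ := Nat.find_spec hex
    set b := Nat.find hex with hbdef
    have hmin : ∀ m, m < b → ¬(1 ≤ m ∧ m ≤ n ∧ (m = n ∨ B m)) :=
      fun m hm => Nat.find_min hex hm
    by_cases hbn : b = n
    · refine ⟨[n], by simp [hn], by simp, ?_⟩
      intro p
      simp only [prefsums, List.mem_cons, List.mem_map, List.not_mem_nil]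
      constructor
      · rintro (rfl | ⟨q, hq, rfl⟩)
        · exact Or.inl rfl
        · simp [prefsums] at hq
      · rintro (rfl | ⟨h1, h2, h3⟩)
        · exact Or.inl rfl
        · exact absurd ⟨h1, by omega, Or.inr h3⟩ (hmin p (by omega))
    · have hBb : B b := by
        rcases hb3 with h | h
        · exact absurd h hbn
        · exact h
      obtain ⟨L', hL1, hL2, hL3⟩ := ih (n - b) (by omega) (by omega) (fun q => B (q + b))
      refine ⟨b :: L', ?_, by simp [hL2]; omega, ?_⟩
      · intro x hx
        rcases List.mem_cons.mp hx with rfl | hx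
        · exact hb1
        · exact hL1 x hx
      · intro p
        simp only [prefsums, List.mem_cons, List.mem_map]
        constructor
        · rintro (rfl | ⟨q, hq, rfl⟩)
          · exact Or.inr ⟨hb1, by omega, hBb⟩
          · rcases (hL3 q).mp hq with rfl | ⟨h1, h2, h3⟩
            · left; omega
            · right
              refine ⟨by omega, by omega, ?_⟩
              have he : b + q = q + b := Nat.add_comm b q
              rw [he]; exact h3
        · rintro (heq | ⟨h1, h2, h3⟩)
          · exact Or.inr ⟨n - b, (hL3 _).mpr (Or.inl rfl), by omega⟩
          · by_cases hpb : p < b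
            · exact absurd ⟨h1, by omega, Or.inr h3⟩ (hmin p hpb)
            · by_cases hpb2 : p = b
              · exact Or.inl hpb2
              · refine Or.inr ⟨p - b, (hL3 _).mpr (Or.inr ⟨by omega, by omega, ?_⟩), by omega⟩
                have hpe : p - b + b = p := by omega
                rw [hpe]; exact h3

/-- Every transfer system on `[n]` has a minimal saturated transfer system
containing it. -/
theorem exists_minimal_saturated_hull (n : ℕ) (O : ℕ → ℕ → Prop)
    (hO : IsTransferSystem n O) :
    ∃ S : ℕ → ℕ → Prop,
      IsTransferSystem n S ∧ IsSaturated n S ∧ (∀ i j, O i j → S i j) ∧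
      ∀ S' : ℕ → ℕ → Prop, IsTransferSystem n S' → IsSaturated n S' →
        (∀ i j, O i j → S' i j) → ∀ i j, S i j → S' i j := by
  rcases Nat.eq_zero_or_pos n with rfl | hn
  · refine ⟨concatCompletes [], ?_, ⟨[], by simp, rfl, rfl⟩, ?_, ?_⟩
    · refine ⟨fun i h1 h2 => absurd h2 (by omega), fun i j k h => ?_, fun i j h => ?_, fun i j k h => ?_⟩
      all_goals exact (h : False).elim
    · intro i j hij
      have := hO.2.2.1 i j hij
      exact absurd this (by omega)
    · intro S' _ _ _ i j hS
      exact (hS : False).elim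
  · obtain ⟨L, hL1, hL2, hL3⟩ := exists_break_list n hn
      (fun m => ¬ ∃ i j, O i j ∧ i ≤ m ∧ m < j)
    have hchar := fun i j => concatCompletes_iff L hL1 i j
    simp only [hL2] at hchar
    refine ⟨concatCompletes L, ⟨?_, ?_, ?_, ?_⟩, ⟨L, hL1, hL2, rfl⟩, ?_, ?_⟩
    · intro i h1 h2
      exact (hchar i i).mpr ⟨h1, le_refl i, h2, fun p _ => by omega⟩
    · intro i j k hij hjk
      obtain ⟨a1, a2, a3, a4⟩ := (hchar i j).mp hij
      obtain ⟨b1, b2, b3, b4⟩ := (hchar j k).mp hjk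
      refine (hchar i k).mpr ⟨a1, by omega, b3, fun p hp => ?_⟩
      have := a4 p hp
      have := b4 p hp
      omega
    · intro i j hij
      obtain ⟨a1, a2, a3, _⟩ := (hchar i j).mp hij
      exact ⟨a1, a2, a3⟩
    · intro i j k hij hik hkj
      obtain ⟨a1, a2, a3, a4⟩ := (hchar i j).mp hij
      refine (hchar i k).mpr ⟨a1, hik, by omega, fun p hp => ?_⟩
      have := a4 p hp
      omega
    · intro i j hij
      obtain ⟨a1, a2, a3⟩ := hO.2.2.1 i j hij
      refine (hchar i j).mpr ⟨a1, a2, a3, fun p hp => ?_⟩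
      rintro ⟨hip, hpj⟩
      rcases (hL3 p).mp hp with rfl | ⟨_, _, hB⟩
      · omega
      · exact hB ⟨i, j, hij, hip, hpj⟩
    · rintro S' _ ⟨L', hL1', hL2', rfl⟩ hOS' i j hSij
      have hchar' := fun a b => concatCompletes_iff L' hL1' a b
      simp only [hL2'] at hchar'
      obtain ⟨a1, a2, a3, a4⟩ := (hchar i j).mp hSij
      refine (hchar' i j).mpr ⟨a1, a2, a3, fun p hp => ?_⟩
      rintro ⟨hip, hpj⟩
      have hpB : ¬ ∃ i' j', O i' j' ∧ i' ≤ p ∧ p < j' := by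
        rintro ⟨i', j', hO', hi', hj'⟩
        have := ((hchar' i' j').mp (hOS' i' j' hO')).2.2.2 p hp
        exact this ⟨hi', hj'⟩
      have hpmem : p ∈ prefsums L :=
        (hL3 p).mpr (Or.inr ⟨prefsums_pos L' hL1' p hp, by omega, hpB⟩)
      exact (a4 p hpmem) ⟨hip, hpj⟩
end

section
/- A transfer system O on [n] is saturated if and only if whenever i →_O j with i < j, we have (j − 1) →_O j. -/
lemma concat_step : ∀ (L : List ℕ) (i j : ℕ), concatCompletes L i j → i < j →
    concatCompletes L (j - 1) j := by
  intro L
  induction L with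
  | nil => intro i j h; exact h.elim
  | cons k L ih =>
    intro i j h hij
    rcases h with ⟨hjk, h1, _, _⟩ | ⟨hki, h⟩
    · exact Or.inl ⟨hjk, by omega, by omega, hjk⟩
    · right
      refine ⟨by omega, ?_⟩
      have h2 := ih (i - k) (j - k) h (by omega)
      have he : j - 1 - k = j - k - 1 := by omega
      rw [he]; exact h2

lemma sat_of_step : ∀ n O, IsTransferSystem n O →
    (∀ i j, O i j → i < j → O (j - 1) j) → IsSaturated n O := by
  intro n
  induction n using Nat.strong_induction_on with
  | _ n IH =>
    intro O hO hstep
    obtain ⟨hrefl, htrans, hsupp, hres⟩ := hO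
    rcases Nat.eq_zero_or_pos n with hn | hn
    · refine ⟨[], by simp, by simp [hn], ?_⟩
      funext i j
      apply propext
      constructor
      · intro h; have := hsupp i j h; omega
      · intro h; exact h.elim
    · classical
      set P : ℕ → Prop := fun m => ∀ j, 2 ≤ j → j ≤ m → O (j - 1) j with hP
      set k := Nat.findGreatest P n with hk
      have hP1 : P 1 := by intro j h1 h2; omega
      have hk1 : 1 ≤ k := Nat.le_findGreatest hn hP1
      have hkn : k ≤ n := Nat.findGreatest_le n
      have hPk : P k := Nat.findGreatest_spec hn hP1
      -- complete on [1..k]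
      have hchain : ∀ d i, 1 ≤ i → i + d ≤ k → O i (i + d) := by
        intro d
        induction d with
        | zero => intro i h1 h2; exact hrefl i h1 (by omega)
        | succ d ih =>
          intro i h1 h2
          have h3 := ih i h1 (by omega)
          have h4 : O (i + d) (i + d + 1) := by
            have := hPk (i + d + 1) (by omega) (by omega)
            simpa using this
          exact htrans _ _ _ h3 h4
      have hchain' : ∀ i j, 1 ≤ i → i ≤ j → j ≤ k → O i j := by
        intro i j h1 h2 h3
        have := hchain (j - i) i h1 (by omega)
        have he : i + (j - i) = j := by omega
        rwa [he] at this
      -- no crossing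
      have hnocross : ∀ i j, O i j → i ≤ k → k < j → False := by
        intro i j h hik hkj
        have h1 : O i (k + 1) := hres i j (k + 1) h (by omega) (by omega)
        have h2 : O k (k + 1) := by
          have := hstep i (k + 1) h1 (by omega)
          simpa using this
        have hPk1 : P (k + 1) := by
          intro j' hj1 hj2
          rcases Nat.lt_or_ge j' (k + 1) with h' | h'
          · exact hPk j' hj1 (by omega)
          · have : j' = k + 1 := by omega
            subst this; simpa using h2
        have hkn1 : k + 1 ≤ n := (hsupp _ _ h1).2.2
        exact Nat.findGreatest_is_greatest (by omega) hkn1 hPk1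
      -- shifted system
      set O' := gfpTS k O with hO'
      have hO'ts : IsTransferSystem (n - k) O' := by
        refine ⟨?_, ?_, ?_, ?_⟩
        · intro a h1 h2; exact ⟨h1, hrefl (a + k) (by omega) (by omega)⟩
        · intro a b c h1 h2; exact ⟨h1.1, htrans _ _ _ h1.2 h2.2⟩
        · intro a b h
          have := hsupp _ _ h.2
          exact ⟨h.1, by omega, by omega⟩
        · intro a b c h h1 h2
          exact ⟨h.1, hres _ _ (c + k) h.2 (by omega) (by omega)⟩
      have hO'step : ∀ a b, O' a b → a < b → O' (b - 1) b := by
        intro a b h hab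
        have ha : 1 ≤ a := h.1
        have h2 : O (b + k - 1) (b + k) := hstep (a + k) (b + k) h.2 (by omega)
        refine ⟨by omega, ?_⟩
        have he : b - 1 + k = b + k - 1 := by omega
        rw [he]; exact h2
      obtain ⟨L', hpos', hsum', heq'⟩ := IH (n - k) (by omega) O' hO'ts hO'step
      refine ⟨k :: L', ?_, ?_, ?_⟩
      · intro m hm
        rcases List.mem_cons.mp hm with hm | hm
        · omega
        · exact hpos' m (by simpa using hm)
      · simp [hsum']; omega
      · funext i j
        apply propext
        show O i j ↔ concatTS k (completeTS k) (concatCompletes L') i j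
        rw [← heq']
        constructor
        · intro h
          obtain ⟨h1, h2, h3⟩ := hsupp i j h
          rcases le_or_gt j k with hj | hj
          · exact Or.inl ⟨hj, h1, h2, hj⟩
          · have hik : k + 1 ≤ i := by
              by_contra hc
              exact hnocross i j h (by omega) hj
            right
            refine ⟨hik, by omega, ?_⟩
            have he1 : i - k + k = i := by omega
            have he2 : j - k + k = j := by omega
            rw [he1, he2]; exact h
        · rintro (⟨hj, h1, h2, _⟩ | ⟨hik, h1, h2⟩)
          · exact hchain' i j h1 h2 hj
          · have := hsupp _ _ h2
            have he1 : i - k + k = i := by omega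
            have he2 : j - k + k = j := by omega
            rw [he1, he2] at h2
            exact h2

/-- A transfer system `O` on `[n]` is saturated iff whenever `i →_O j`
with `i < j`, we have `(j-1) →_O j`. -/
theorem saturated_iff_pred_step (n : ℕ) (O : ℕ → ℕ → Prop)
    (hO : IsTransferSystem n O) :
    IsSaturated n O ↔ ∀ i j, O i j → i < j → O (j - 1) j := by
  constructor
  · rintro ⟨L, _, _, rfl⟩ i j h hij
    exact concat_step L i j h hij
  · intro h
    exact sat_of_step n O hO h
end

section
/- A transfer system O on [n] is saturated if and only if it equals its core, i.e. O is the transitive-reflexive closure of its covering relations: i →_O j if and only if m →_O (m + 1) for every m with i ≤ m < j. -/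
lemma concatCompletes_core (L : List ℕ) (i j : ℕ) :
    concatCompletes L i j ↔ coreTS L.sum (concatCompletes L) i j := by
  induction L generalizing i j with
  | nil =>
    simp only [concatCompletes, coreTS, List.sum_nil]
    constructor
    · intro h; exact h.elim
    · intro ⟨h1, h2, h3, _⟩; omega
  | cons k L ih =>
    simp only [concatCompletes, List.sum_cons]
    constructor
    · rintro (⟨hjk, h1, h2, h3⟩ | ⟨hki, hR⟩)
      · refine ⟨h1, h2, by omega, fun m hm1 hm2 => ?_⟩
        exact Or.inl ⟨by omega, by omega, by omega, by omega⟩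
      · obtain ⟨h1, h2, h3, h4⟩ := (ih _ _).1 hR
        refine ⟨by omega, by omega, by omega, fun m hm1 hm2 => ?_⟩
        refine Or.inr ⟨by omega, ?_⟩
        have : m + 1 - k = (m - k) + 1 := by omega
        rw [this]
        exact h4 (m - k) (by omega) (by omega)
    · rintro ⟨h1, h2, h3, h4⟩
      by_cases hjk : j ≤ k
      · exact Or.inl ⟨hjk, h1, h2, hjk⟩
      · by_cases hik : k + 1 ≤ i
        · refine Or.inr ⟨hik, (ih _ _).2 ⟨by omega, by omega, by omega,
            fun m hm1 hm2 => ?_⟩⟩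
          have h5 := h4 (m + k) (by omega) (by omega)
          rcases h5 with ⟨hc, _⟩ | ⟨_, hc⟩
          · omega
          · have e1 : m + k - k = m := by omega
            have e2 : m + k + 1 - k = m + 1 := by omega
            rwa [e1, e2] at hc
        · -- crossing: i ≤ k < j, arrow k → k+1 impossible
          exfalso
          have h5 := h4 k (by omega) (by omega)
          rcases h5 with ⟨hc, _⟩ | ⟨hc, _⟩ <;> omega

lemma eq_core_saturated : ∀ n : ℕ, ∀ O : ℕ → ℕ → Prop,
    IsTransferSystem n O → O = coreTS n O → IsSaturated n O := by
  intro n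
  induction n using Nat.strong_induction_on with
  | _ n ih =>
    intro O hO hcore
    obtain ⟨hrefl, htrans, hbd, hres⟩ := hO
    rcases Nat.eq_zero_or_pos n with hn | hn
    · subst hn
      refine ⟨[], by simp, by simp, ?_⟩
      funext i j
      simp only [concatCompletes, eq_iff_iff, iff_false]
      intro h
      have := hbd i j h
      omega
    · classical
      set k := Nat.findGreatest (fun j => O 1 j) n with hk
      have h11 : O 1 1 := hrefl 1 le_rfl hn
      have hk1 : 1 ≤ k := Nat.le_findGreatest hn h11
      have hkn : k ≤ n := Nat.findGreatest_le n
      have hOk : O 1 k := Nat.findGreatest_spec hn h11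
      have hkmax : ∀ j, k < j → j ≤ n → ¬ O 1 j :=
        fun j h1 h2 => Nat.findGreatest_is_greatest h1 h2
      -- consecutive arrows up to k
      have hcons : ∀ m, 1 ≤ m → m < k → O m (m + 1) := by
        intro m h1 h2
        have := hcore ▸ hOk
        exact this.2.2.2 m h1 h2
      -- full completeness below k
      have hcomp : ∀ i j, 1 ≤ i → i ≤ j → j ≤ k → O i j := by
        intro i j h1 h2 h3
        rw [hcore]
        exact ⟨h1, h2, by omega, fun m hm1 hm2 => hcons m (by omega) (by omega)⟩
      -- no arrow k → k+1
      have hnocross : ¬ O k (k + 1) := by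
        intro h
        have hkn' : k + 1 ≤ n := (hbd _ _ h).2.2
        refine hkmax (k + 1) (by omega) hkn' ?_
        rw [hcore]
        refine ⟨le_rfl, by omega, hkn', fun m hm1 hm2 => ?_⟩
        rcases Nat.lt_or_ge m k with h' | h'
        · exact hcons m hm1 h'
        · have : m = k := by omega
          subst this; exact h
      have hnocross' : ∀ i j, O i j → i ≤ k → k < j → False := by
        intro i j h h1 h2
        have hb := hbd _ _ h
        have := (hcore ▸ h).2.2.2 k h1 h2
        exact hnocross this
      -- the shifted system
      set O' : ℕ → ℕ → Prop := fun i j => 1 ≤ i ∧ O (i + k) (j + k) with hO'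
      have hO'ts : IsTransferSystem (n - k) O' := by
        refine ⟨fun i h1 h2 => ⟨h1, hrefl _ (by omega) (by omega)⟩,
          fun i j l h1 h2 => ⟨h1.1, htrans _ _ _ h1.2 h2.2⟩,
          fun i j h => ?_, fun i j l h h1 h2 => ⟨h.1, hres _ _ _ h.2 (by omega) (by omega)⟩⟩
        have hb := hbd _ _ h.2
        exact ⟨h.1, by omega, by omega⟩
      have hO'core : O' = coreTS (n - k) O' := by
        funext i j
        simp only [eq_iff_iff]
        constructor
        · rintro ⟨h1, h⟩
          have hb := hbd _ _ h
          have hc := (hcore ▸ h).2.2.2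
          refine ⟨h1, by omega, by omega, fun m hm1 hm2 => ⟨by omega, ?_⟩⟩
          have := hc (m + k) (by omega) (by omega)
          have e : m + k + 1 = m + 1 + k := by omega
          rwa [e] at this
        · rintro ⟨h1, h2, h3, h4⟩
          refine ⟨h1, ?_⟩
          rw [hcore]
          refine ⟨by omega, by omega, by omega, fun M hM1 hM2 => ?_⟩
          have := (h4 (M - k) (by omega) (by omega)).2
          have e1 : M - k + k = M := by omega
          have e2 : M - k + 1 + k = M + 1 := by omega
          rwa [e1, e2] at this
      obtain ⟨L', hL'pos, hL'sum, hL'eq⟩ := ih (n - k) (by omega) O' hO'ts hO'core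
      refine ⟨k :: L', ?_, by simp [hL'sum]; omega, ?_⟩
      · intro m hm
        rcases List.mem_cons.1 hm with h | h
        · subst h; omega
        · exact hL'pos m h
      · funext i j
        simp only [concatCompletes, concatTS, ← hL'eq, eq_iff_iff]
        constructor
        · intro h
          have hb := hbd _ _ h
          by_cases hjk : j ≤ k
          · exact Or.inl ⟨hjk, by omega, by omega, hjk⟩
          · have hik : k + 1 ≤ i := by
              by_contra hc
              exact hnocross' i j h (by omega) (by omega)
            refine Or.inr ⟨hik, by omega, ?_⟩
            have e1 : i - k + k = i := by omega
            have e2 : j - k + k = j := by omega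
            show O (i - k + k) (j - k + k)
            rw [e1, e2]; exact h
        · rintro (⟨hjk, h1, h2, h3⟩ | ⟨hik, h1, h⟩)
          · exact hcomp i j h1 h2 h3
          · have hb := hbd _ _ h
            have e1 : i - k + k = i := by omega
            have e2 : j - k + k = j := by omega
            rw [e1, e2] at h
            exact h


/-- A transfer system `O` on `[n]` is saturated iff it equals its core,
i.e. `i →_O j` iff `m →_O (m+1)` for every `m` with `i ≤ m < j`. -/
theorem saturated_iff_eq_core (n : ℕ) (O : ℕ → ℕ → Prop)
    (hO : IsTransferSystem n O) :
    IsSaturated n O ↔ O = coreTS n O := by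
  constructor
  · rintro ⟨L, hpos, hsum, heq⟩
    subst heq
    rw [← hsum]
    funext i j
    exact propext (concatCompletes_core L i j)
  · exact eq_core_saturated n O hO
end

section
/- For transfer systems O_a, O_m on [n], the following are equivalent: (1) the pair (O_a, O_m) is compatible; (2) O_m ≤ core(O_a); (3) hull(O_m) ≤ O_a; (4) hull(O_m) ≤ core(O_a). -/
section Aux

/-- Chaining consecutive arrows through a transfer system. -/
lemma ts_chain {n : ℕ} {Oa : ℕ → ℕ → Prop} (ha : IsTransferSystem n Oa) :
    ∀ d i, 1 ≤ i → i + d ≤ n → (∀ m, i ≤ m → m < i + d → Oa m (m + 1)) → Oa i (i + d) := by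
  intro d
  induction d with
  | zero => intro i h1 h2 _; exact ha.1 i h1 (by omega)
  | succ d ih =>
    intro i h1 h2 hc
    have h0 : Oa i (i + 1) := hc i le_rfl (by omega)
    have h3 : Oa (i + 1) (i + 1 + d) := by
      apply ih (i + 1) (by omega) (by omega)
      intro m hm1 hm2
      exact hc m (by omega) (by omega)
    have : Oa i (i + 1 + d) := ha.2.1 i (i + 1) (i + 1 + d) h0 h3
    have he : i + (d + 1) = i + 1 + d := by omega
    rw [he]; exact this

lemma core_le_self {n : ℕ} {Oa : ℕ → ℕ → Prop} (ha : IsTransferSystem n Oa)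
    {i j : ℕ} (h : coreTS n Oa i j) : Oa i j := by
  obtain ⟨h1, h2, h3, h4⟩ := h
  have he : j = i + (j - i) := by omega
  rw [he]
  exact ts_chain ha (j - i) i h1 (by omega) (fun m hm1 hm2 => h4 m hm1 (by omega))

lemma coreTS_isTS (n : ℕ) (Oa : ℕ → ℕ → Prop) : IsTransferSystem n (coreTS n Oa) := by
  refine ⟨?_, ?_, ?_, ?_⟩
  · intro i h1 h2; exact ⟨h1, le_rfl, h2, fun m hm1 hm2 => by omega⟩
  · rintro i j k ⟨a1, a2, a3, a4⟩ ⟨b1, b2, b3, b4⟩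
    refine ⟨a1, by omega, b3, fun m hm1 hm2 => ?_⟩
    by_cases h : m < j
    · exact a4 m hm1 h
    · exact b4 m (by omega) hm2
  · rintro i j ⟨a1, a2, a3, _⟩; exact ⟨a1, a2, a3⟩
  · rintro i j k ⟨a1, a2, a3, a4⟩ h1 h2
    exact ⟨a1, h1, by omega, fun m hm1 hm2 => a4 m hm1 (by omega)⟩

/-- Any "core-shaped" relation is a concatenation of completes. -/
lemma sat_aux : ∀ (n : ℕ) (P : ℕ → Prop), ∃ L : List ℕ, (∀ k ∈ L, 0 < k) ∧ L.sum = n ∧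
    ∀ i j, concatCompletes L i j ↔ (1 ≤ i ∧ i ≤ j ∧ j ≤ n ∧ ∀ m, i ≤ m → m < j → P m) := by
  intro n
  induction n using Nat.strong_induction_on with
  | _ n IH =>
    intro P
    match n with
    | 0 =>
      refine ⟨[], by simp, by simp, fun i j => ?_⟩
      simp only [concatCompletes]
      constructor
      · intro h; exact h.elim
      · intro ⟨h1, h2, h3, _⟩; omega
    | Nat.succ n =>
      classical
      set Q : ℕ → Prop := fun b => ∀ m, 1 ≤ m → m < b → P m with hQ
      set k := Nat.findGreatest Q (n + 1) with hk
      have hk1 : 1 ≤ k := Nat.le_findGreatest (by omega) (fun m h1 h2 => by omega)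
      have hkn : k ≤ n + 1 := Nat.findGreatest_le _
      have hQk : Q k := Nat.findGreatest_spec (P := Q) (m := 1) (by omega)
        (fun m h1 h2 => by omega)
      have hmax : ∀ b, k < b → b ≤ n + 1 → ¬ Q b := fun b hb1 hb2 =>
        Nat.findGreatest_is_greatest hb1 hb2
      obtain ⟨L', hpos, hsum, hiff⟩ := IH (n + 1 - k) (by omega) (fun m => P (m + k))
      refine ⟨k :: L', ?_, by simp [hsum]; omega, ?_⟩
      · intro x hx
        rcases List.mem_cons.1 hx with h | h
        · omega
        · exact hpos x h
      intro i j
      show concatTS k (completeTS k) (concatCompletes L') i j ↔ _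
      unfold concatTS completeTS
      constructor
      · rintro (⟨hjk, h1, h2, h3⟩ | ⟨hik, hR⟩)
        · exact ⟨h1, h2, by omega, fun m hm1 hm2 => hQk m (by omega) (by omega)⟩
        · obtain ⟨b1, b2, b3, b4⟩ := (hiff _ _).1 hR
          refine ⟨by omega, by omega, by omega, fun m hm1 hm2 => ?_⟩
          have := b4 (m - k) (by omega) (by omega)
          have he : m - k + k = m := by omega
          rwa [he] at this
      · rintro ⟨h1, h2, h3, h4⟩
        by_cases hjk : j ≤ k
        · exact Or.inl ⟨hjk, h1, h2, hjk⟩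
        · have hik : k + 1 ≤ i := by
            by_contra hc
            apply hmax (k + 1) (by omega) (by omega)
            intro m hm1 hm2
            by_cases h : m < i
            · exact hQk m hm1 (by omega)
            · exact h4 m (by omega) (by omega)
          refine Or.inr ⟨hik, (hiff _ _).2 ⟨by omega, by omega, by omega, ?_⟩⟩
          intro m hm1 hm2
          exact h4 (m + k) (by omega) (by omega)

lemma coreTS_isSat (n : ℕ) (Oa : ℕ → ℕ → Prop) : IsSaturated n (coreTS n Oa) := by
  obtain ⟨L, hpos, hsum, hiff⟩ := sat_aux n (fun m => Oa m (m + 1))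
  refine ⟨L, hpos, hsum, ?_⟩
  funext i j
  exact propext ((hiff i j).symm)

lemma concatCompletes_restrict : ∀ (L : List ℕ) (i k j : ℕ),
    concatCompletes L i j → i ≤ k → k ≤ j → concatCompletes L k j := by
  intro L
  induction L with
  | nil => intro i k j h _ _; exact h.elim
  | cons a L ih =>
    intro i k j h hik hkj
    rcases h with ⟨hja, h1, h2, h3⟩ | ⟨hai, hR⟩
    · exact Or.inl ⟨hja, by omega, hkj, h3⟩
    · exact Or.inr ⟨by omega, ih (i - a) (k - a) (j - a) hR (by omega) (by omega)⟩

end Aux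

/-- For transfer systems `O_a, O_m` on `[n]`, with `H = hull(O_m)` the
minimal saturated transfer system containing `O_m`, the following are equivalent:
(1) `(O_a, O_m)` is compatible; (2) `O_m ≤ core(O_a)`; (3) `hull(O_m) ≤ O_a`;
(4) `hull(O_m) ≤ core(O_a)`. -/
theorem compatible_tfae (n : ℕ) (Oa Om H : ℕ → ℕ → Prop)
    (ha : IsTransferSystem n Oa) (hm : IsTransferSystem n Om)
    (hHts : IsTransferSystem n H) (hHsat : IsSaturated n H)
    (hHub : ∀ i j, Om i j → H i j)
    (hHmin : ∀ S : ℕ → ℕ → Prop, IsTransferSystem n S → IsSaturated n S →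
      (∀ i j, Om i j → S i j) → ∀ i j, H i j → S i j) :
    List.TFAE
      [Compatible Oa Om,
       ∀ i j, Om i j → coreTS n Oa i j,
       ∀ i j, H i j → Oa i j,
       ∀ i j, H i j → coreTS n Oa i j] := by
  tfae_have 1 → 2 := by
    intro h1 i j hij
    obtain ⟨b1, b2, b3⟩ := hm.2.2.1 i j hij
    refine ⟨b1, b2, b3, fun m hm1 hm2 => ?_⟩
    have h := h1 i j m hij hm1 (by omega)
    exact ha.2.2.2 m j (m + 1) h (by omega) (by omega)
  tfae_have 2 → 4 := by
    intro h2
    exact hHmin _ (coreTS_isTS n Oa) (coreTS_isSat n Oa) h2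
  tfae_have 4 → 3 := by
    intro h4 i j hij
    exact core_le_self ha (h4 i j hij)
  tfae_have 3 → 1 := by
    intro h3 i j k hij hik hkj
    obtain ⟨L, hpos, hsum, hHeq⟩ := hHsat
    apply h3 k j
    rw [hHeq]
    have hH : concatCompletes L i j := by rw [← hHeq]; exact hHub i j hij
    exact concatCompletes_restrict L i k j hH hik hkj
  tfae_finish
end

section
/- Let (O_a, O_m) be a compatible pair of transfer systems on [n]. If for some 1 ≤ k ≤ n − 1 it is not the case that k →_{O_a} (k + 1), then for all j ≤ k and all ℓ ≥ k + 1, it is not the case that j →_{O_m} ℓ. -/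
/-- If `(O_a, O_m)` is a compatible pair of transfer systems on `[n]` and
`k →_{O_a} (k+1)` fails for some `1 ≤ k ≤ n - 1`, then `j →_{O_m} ℓ` fails for all
`j ≤ k` and `ℓ ≥ k + 1`. -/
theorem compatible_break (n k : ℕ) (Oa Om : ℕ → ℕ → Prop)
    (ha : IsTransferSystem n Oa) (hm : IsTransferSystem n Om)
    (hc : Compatible Oa Om) (hk1 : 1 ≤ k) (hk2 : k ≤ n - 1)
    (hna : ¬ Oa k (k + 1)) :
    ∀ j ℓ, j ≤ k → k + 1 ≤ ℓ → ¬ Om j ℓ := by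
  intro j ℓ hj hℓ h
  exact hna (ha.2.2.2 k ℓ (k + 1) (hc j ℓ k h hj (le_trans (Nat.le_succ k) hℓ))
    (Nat.le_succ k) hℓ)
end

section
/- Let (O_a, O_m) be a compatible pair of transfer systems on [n], and suppose for some 1 ≤ k ≤ n − 1 it is not the case that k →_{O_a} (k + 1). Then O_m = (i_k^* O_m) ⊕ (Φ^k O_m), and the pairs (i_k^* O_a, i_k^* O_m) and (Φ^k O_a, Φ^k O_m) are compatible pairs of transfer systems on [k] and [n − k] respectively. -/
lemma restrict_TS (n k : ℕ) (R : ℕ → ℕ → Prop) (h : IsTransferSystem n R)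
    (hkn : k ≤ n) : IsTransferSystem k (restrictTS k R) := by
  obtain ⟨hr, ht, hb, hres⟩ := h
  refine ⟨fun i h1 h2 => ⟨h2, hr i h1 (h2.trans hkn)⟩,
    fun i j l ⟨hj, hij⟩ ⟨hl, hjl⟩ => ⟨hl, ht i j l hij hjl⟩,
    fun i j ⟨hj, hij⟩ => ⟨(hb i j hij).1, (hb i j hij).2.1, hj⟩,
    fun i j m ⟨hj, hij⟩ him hmj => ⟨hmj.trans hj, hres i j m hij him hmj⟩⟩

lemma gfp_TS (n k : ℕ) (R : ℕ → ℕ → Prop) (h : IsTransferSystem n R) :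
    IsTransferSystem (n - k) (gfpTS k R) := by
  obtain ⟨hr, ht, hb, hres⟩ := h
  refine ⟨fun i h1 h2 => ⟨h1, hr (i + k) (le_add_right h1) (by omega)⟩,
    fun i j l ⟨h1, hij⟩ ⟨h2, hjl⟩ => ⟨h1, ht _ _ _ hij hjl⟩,
    fun i j ⟨h1, hij⟩ => by have := hb _ _ hij; exact ⟨h1, by omega, by omega⟩,
    fun i j m ⟨h1, hij⟩ him hmj => ⟨h1, hres _ _ _ hij (by omega) (by omega)⟩⟩

/-- If `(O_a, O_m)` is a compatible pair of transfer systems on `[n]` and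
`k →_{O_a} (k+1)` fails for some `1 ≤ k ≤ n-1`, then `O_m = (i_k^* O_m) ⊕ (Φ^k O_m)`
and the pairs `(i_k^* O_a, i_k^* O_m)` and `(Φ^k O_a, Φ^k O_m)` are compatible pairs of
transfer systems on `[k]` and `[n-k]` respectively. -/
theorem compatible_splits (n k : ℕ) (Oa Om : ℕ → ℕ → Prop)
    (ha : IsTransferSystem n Oa) (hm : IsTransferSystem n Om)
    (hc : Compatible Oa Om) (hk1 : 1 ≤ k) (hk2 : k ≤ n - 1)
    (hna : ¬ Oa k (k + 1)) :
    Om = concatTS k (restrictTS k Om) (gfpTS k Om) ∧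
    IsTransferSystem k (restrictTS k Oa) ∧ IsTransferSystem k (restrictTS k Om) ∧
    Compatible (restrictTS k Oa) (restrictTS k Om) ∧
    IsTransferSystem (n - k) (gfpTS k Oa) ∧ IsTransferSystem (n - k) (gfpTS k Om) ∧
    Compatible (gfpTS k Oa) (gfpTS k Om) := by
  have hkn : k ≤ n := by omega
  obtain ⟨hra, hta, hba, hresa⟩ := ha
  obtain ⟨hrm, htm, hbm, hresm⟩ := hm
  refine ⟨?_, restrict_TS n k Oa ⟨hra, hta, hba, hresa⟩ hkn,
    restrict_TS n k Om ⟨hrm, htm, hbm, hresm⟩ hkn,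
    fun i j m ⟨hj, hij⟩ him hmj => ⟨hj, hc i j m hij him hmj⟩,
    gfp_TS n k Oa ⟨hra, hta, hba, hresa⟩, gfp_TS n k Om ⟨hrm, htm, hbm, hresm⟩,
    fun i j m ⟨h1, hij⟩ him hmj => ⟨h1.trans him, hc _ _ _ hij (by omega) (by omega)⟩⟩
  funext i j
  apply propext
  constructor
  · intro hij
    have hb := hbm i j hij
    by_cases hjk : j ≤ k
    · exact Or.inl ⟨hjk, hjk, hij⟩
    · have hik : k + 1 ≤ i := by
        by_contra hik
        have hkj : k ≤ j := by omega
        have := hc i j k hij (by omega) hkj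
        exact hna (hresa k j (k+1) this (by omega) (by omega))
      refine Or.inr ⟨hik, by omega, ?_⟩
      have : i - k + k = i := by omega
      rw [this]
      have : j - k + k = j := by omega
      rw [this]; exact hij
  · rintro (⟨hjk, hjk', hij⟩ | ⟨hik, h1, hij⟩)
    · exact hij
    · have hb := hbm _ _ hij
      have hi : i - k + k = i := by omega
      have hj : j - k + k = j := by omega
      rwa [hi, hj] at hij
end

section
/- For all natural numbers n and i with 0 ≤ i ≤ n − 1, the counts d(n, i) satisfy the recurrence d(n, i) = d(n, i + 1) + Σ_{j=1}^{n−i−1} d(n − j, i) · d(j, 1). -/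
section Basic

variable {n k m : ℕ} {R a : ℕ → ℕ → Prop}

lemma IsTransferSystem.refl (h : IsTransferSystem n R) : ∀ i, 1 ≤ i → i ≤ n → R i i := h.1
lemma IsTransferSystem.trans (h : IsTransferSystem n R) : ∀ i j k, R i j → R j k → R i k := h.2.1
lemma IsTransferSystem.bdd (h : IsTransferSystem n R) : ∀ i j, R i j → 1 ≤ i ∧ i ≤ j ∧ j ≤ n := h.2.2.1
lemma IsTransferSystem.restr (h : IsTransferSystem n R) : ∀ i j k, R i j → i ≤ k → k ≤ j → R i k := h.2.2.2

lemma ts_restrict (h : IsTransferSystem n R) (hk : k ≤ n) :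
    IsTransferSystem k (restrictTS k R) := by
  refine ⟨?_, ?_, ?_, ?_⟩
  · exact fun i h1 h2 => ⟨h2, h.refl i h1 (h2.trans hk)⟩
  · exact fun i j l ⟨hj, hij⟩ ⟨hl, hjl⟩ => ⟨hl, h.trans _ _ _ hij hjl⟩
  · intro i j ⟨hj, hij⟩
    obtain ⟨h1, h2, _⟩ := h.bdd _ _ hij
    exact ⟨h1, h2, hj⟩
  · intro i j l ⟨hj, hij⟩ h1 h2
    exact ⟨h2.trans hj, h.restr _ _ _ hij h1 h2⟩

lemma ts_gfp (h : IsTransferSystem n R) :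
    IsTransferSystem (n - k) (gfpTS k R) := by
  refine ⟨?_, ?_, ?_, ?_⟩
  · exact fun i h1 h2 => ⟨h1, h.refl _ (by omega) (by omega)⟩
  · exact fun i j l ⟨hi, hij⟩ ⟨hj, hjl⟩ => ⟨hi, h.trans _ _ _ hij hjl⟩
  · intro i j ⟨hi, hij⟩
    obtain ⟨_, h2, h3⟩ := h.bdd _ _ hij
    exact ⟨hi, by omega, by omega⟩
  · intro i j l ⟨hi, hij⟩ h1 h2
    exact ⟨hi, h.restr _ _ _ hij (by omega) (by omega)⟩

lemma ts_wrap (h : IsTransferSystem m R) :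
    IsTransferSystem (m + 1) (wrapTS m R) := by
  have bdd : ∀ i j, wrapTS m R i j → 1 ≤ i ∧ i ≤ j ∧ j ≤ m + 1 := by
    rintro i j (⟨rfl, h1, h2⟩ | ⟨h1, h2, h3⟩)
    · exact ⟨le_refl 1, h1, h2⟩
    · obtain ⟨b1, b2, b3⟩ := h.bdd _ _ h3
      exact ⟨by omega, h2, by omega⟩
  refine ⟨?_, ?_, bdd, ?_⟩
  · intro i h1 h2
    rcases Nat.lt_or_ge i 2 with hi | hi
    · left; exact ⟨by omega, h1, h2⟩
    · right; exact ⟨hi, le_refl i, h.refl _ (by omega) (by omega)⟩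
  · rintro i j l (⟨rfl, h1, h2⟩ | ⟨h1, h2, h3⟩) hjl
    · left
      obtain ⟨b1, b2, b3⟩ := bdd _ _ hjl
      exact ⟨rfl, by omega, b3⟩
    · rcases hjl with ⟨rfl, _, _⟩ | ⟨g1, g2, g3⟩
      · omega
      · right; exact ⟨h1, by omega, h.trans _ _ _ h3 g3⟩
  · rintro i j l (⟨rfl, h1, h2⟩ | ⟨h1, h2, h3⟩) hik hkj
    · left; exact ⟨rfl, hik, by omega⟩
    · right; exact ⟨by omega, hik, h.restr _ _ _ h3 (by omega) (by omega)⟩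

lemma ts_wpow (h : IsTransferSystem m R) (i : ℕ) :
    IsTransferSystem (m + i) (wpow m i R) := by
  induction i with
  | zero => exact h
  | succ i ih => exact ts_wrap ih

lemma wrap_image (h : IsTransferSystem (m + 1) a) (h1 : a 1 (m + 1)) :
    a = wrapTS m (gfpTS 1 a) := by
  funext i j
  apply propext
  constructor
  · intro hij
    obtain ⟨b1, b2, b3⟩ := h.bdd _ _ hij
    rcases Nat.lt_or_ge i 2 with hi | hi
    · left; exact ⟨by omega, by omega, b3⟩
    · right
      refine ⟨hi, b2, by omega, ?_⟩
      have : i - 1 + 1 = i := by omega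
      have e2 : j - 1 + 1 = j := by omega
      rw [this, e2]
      exact hij
  · rintro (⟨rfl, g1, g2⟩ | ⟨g1, g2, g3, g4⟩)
    · exact h.restr _ _ _ h1 g1 g2
    · have e1 : i - 1 + 1 = i := by omega
      have hb := (ts_gfp (k := 1) h).bdd _ _ ⟨g3, g4⟩
      have e2 : j - 1 + 1 = j := by omega
      rw [e1, e2] at g4
      exact g4

/-- Characterization of the image of the i-fold wrapping map. -/
lemma wpow_image_iff (hin : i ≤ n) (h : IsTransferSystem n a) :
    (∃ R, IsTransferSystem (n - i) R ∧ a = wpow (n - i) i R) ↔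
      (∀ k, 1 ≤ k → k ≤ i → a k n) := by
  induction i generalizing n a with
  | zero =>
    simp only [Nat.sub_zero]
    constructor
    · intro _ k h1 h2; omega
    · intro _; exact ⟨a, h, rfl⟩
  | succ i ih =>
    constructor
    · rintro ⟨R, hR, rfl⟩
      have e : n - (i + 1) + i = n - 1 := by omega
      have hb : IsTransferSystem (n - 1) (wpow (n - (i+1)) i R) := by
        have := ts_wpow hR i
        rwa [e] at this
      have hbim : ∀ k, 1 ≤ k → k ≤ i → wpow (n - (i+1)) i R k (n - 1) := by
        apply (ih (n := n - 1) (by omega) hb).mp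
        rw [show n - 1 - i = n - (i+1) by omega]
        exact ⟨R, hR, rfl⟩
      intro k h1 h2
      show wrapTS (n - (i+1) + i) (wpow (n - (i+1)) i R) k n
      rcases Nat.lt_or_ge k 2 with hk | hk
      · left; exact ⟨by omega, by omega, by omega⟩
      · right
        refine ⟨hk, by omega, ?_⟩
        have := hbim (k - 1) (by omega) (by omega)
        rwa [show n - 1 = n - 1 from rfl] at this
    · intro hC
      have hn1 : 1 ≤ n := by omega
      have h1n : a 1 n := hC 1 le_rfl (by omega)
      have hts : IsTransferSystem (n - 1 + 1) a := by rwa [show n - 1 + 1 = n by omega]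
      have h1n' : a 1 (n - 1 + 1) := by rwa [show n - 1 + 1 = n by omega]
      have heq := wrap_image hts h1n'
      set b := gfpTS 1 a with hbdef
      have hbts : IsTransferSystem (n - 1) b := ts_gfp h
      have hbC : ∀ k, 1 ≤ k → k ≤ i → b k (n - 1) := by
        intro k h1 h2
        refine ⟨h1, ?_⟩
        rw [show n - 1 + 1 = n by omega]
        exact hC (k + 1) (by omega) (by omega)
      obtain ⟨R, hRts, hbeq⟩ := (ih (n := n - 1) (by omega) hbts).mpr hbC
      refine ⟨R, by rwa [show n - (i+1) = n - 1 - i by omega], ?_⟩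
      show a = wrapTS (n - (i+1) + i) (wpow (n - (i+1)) i R)
      rw [show n - (i+1) = n - 1 - i by omega, show n - 1 - i + i = n - 1 by omega,
        ← hbeq, ← heq]
end Basic

/-- `d(n, i)`: the number of compatible pairs `(O_a, O_m)` of transfer systems on `[n]`
such that `O_a` lies in the image of the `i`-fold wrapping map, i.e. `O_a = w^i(O)` for
some transfer system `O` on `[n - i]`. -/
noncomputable def dCount (n i : ℕ) : ℕ :=
  Nat.card {p : (ℕ → ℕ → Prop) × (ℕ → ℕ → Prop) //
    IsTransferSystem n p.1 ∧ IsTransferSystem n p.2 ∧ Compatible p.1 p.2 ∧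
    ∃ R : ℕ → ℕ → Prop, IsTransferSystem (n - i) R ∧ p.1 = wpow (n - i) i R}

def GoodPair (n i : ℕ) (p : (ℕ → ℕ → Prop) × (ℕ → ℕ → Prop)) : Prop :=
  IsTransferSystem n p.1 ∧ IsTransferSystem n p.2 ∧ Compatible p.1 p.2 ∧
    ∀ k, 1 ≤ k → k ≤ i → p.1 k n

lemma dCount_eq_card (n i : ℕ) (hin : i ≤ n) :
    dCount n i = Nat.card {p // GoodPair n i p} := by
  apply Nat.card_congr
  apply Equiv.subtypeEquivRight
  intro p
  constructor
  · rintro ⟨h1, h2, h3, h4⟩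
    exact ⟨h1, h2, h3, (wpow_image_iff hin h1).mp h4⟩
  · rintro ⟨h1, h2, h3, h4⟩
    exact ⟨h1, h2, h3, (wpow_image_iff hin h1).mpr h4⟩

/-- Any collection of pairs of transfer systems on `[n]` is finite. -/
lemma finite_pairs (n : ℕ) (P : (ℕ → ℕ → Prop) × (ℕ → ℕ → Prop) → Prop)
    (hP : ∀ p, P p → IsTransferSystem n p.1 ∧ IsTransferSystem n p.2) :
    Finite {p // P p} := by
  let F : {p // P p} → ((Fin (n+1) → Fin (n+1) → Prop) × (Fin (n+1) → Fin (n+1) → Prop)) :=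
    fun p => (fun a b => p.1.1 a.1 b.1, fun a b => p.1.2 a.1 b.1)
  apply Finite.of_injective F
  intro p q hpq
  obtain ⟨hp1, hp2⟩ := hP _ p.2
  obtain ⟨hq1, hq2⟩ := hP _ q.2
  have h1 := congrArg Prod.fst hpq
  have h2 := congrArg Prod.snd hpq
  simp only [F] at h1 h2
  apply Subtype.ext
  have key : ∀ (A B : ℕ → ℕ → Prop), IsTransferSystem n A → IsTransferSystem n B →
      (fun (a b : Fin (n+1)) => A a.1 b.1) = (fun (a b : Fin (n+1)) => B a.1 b.1) → A = B := by
    intro A B hA hB hAB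
    funext s t
    apply propext
    constructor
    · intro h
      obtain ⟨b1, b2, b3⟩ := hA.bdd _ _ h
      have := congrFun (congrFun hAB ⟨s, by omega⟩) ⟨t, by omega⟩
      exact this ▸ h
    · intro h
      obtain ⟨b1, b2, b3⟩ := hB.bdd _ _ h
      have := congrFun (congrFun hAB ⟨s, by omega⟩) ⟨t, by omega⟩
      rw [this]; exact h
  exact Prod.ext (key _ _ hp1 hq1 h1) (key _ _ hp2 hq2 h2)

instance goodPair_finite (n i : ℕ) : Finite {p // GoodPair n i p} :=
  finite_pairs n _ (fun p hp => ⟨hp.1, hp.2.1⟩)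

lemma card_split (n i : ℕ) :
    Nat.card {p // GoodPair n i p} =
      Nat.card {p // GoodPair n (i+1) p} +
      Nat.card {p // GoodPair n i p ∧ ¬ p.1 (i+1) n} := by
  classical
  have e1 : {p // GoodPair n (i+1) p} ≃ {p // GoodPair n i p ∧ p.1 (i+1) n} := by
    apply Equiv.subtypeEquivRight
    intro p
    constructor
    · rintro ⟨h1, h2, h3, h4⟩
      exact ⟨⟨h1, h2, h3, fun k hk1 hk2 => h4 k hk1 (by omega)⟩, h4 (i+1) (by omega) le_rfl⟩
    · rintro ⟨⟨h1, h2, h3, h4⟩, h5⟩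
      refine ⟨h1, h2, h3, fun k hk1 hk2 => ?_⟩
      rcases Nat.lt_or_ge k (i+1) with hk | hk
      · exact h4 k hk1 (by omega)
      · have : k = i + 1 := by omega
        exact this ▸ h5
  rw [Nat.card_congr e1]
  have e2 : {p // GoodPair n i p ∧ p.1 (i+1) n} ≃
      {q : {p // GoodPair n i p} // q.1.1 (i+1) n} :=
    (Equiv.subtypeSubtypeEquivSubtypeInter _ _).symm
  have e3 : {p // GoodPair n i p ∧ ¬ p.1 (i+1) n} ≃
      {q : {p // GoodPair n i p} // ¬ q.1.1 (i+1) n} :=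
    (Equiv.subtypeSubtypeEquivSubtypeInter _ _).symm
  rw [Nat.card_congr e2, Nat.card_congr e3]
  haveI : Finite {q : {p // GoodPair n i p} // q.1.1 (i+1) n} := Subtype.finite
  haveI : Finite {q : {p // GoodPair n i p} // ¬ q.1.1 (i+1) n} := Subtype.finite
  rw [← Nat.card_sum]
  exact Nat.card_congr (Equiv.sumCompl (fun q : {p // GoodPair n i p} => q.1.1 (i+1) n)).symm

/-! ### Gluing and decomposition -/

def glueA (n p i : ℕ) (aL aR : ℕ → ℕ → Prop) : ℕ → ℕ → Prop :=
  fun s t => (t ≤ p ∧ aL s t) ∨ (p + 1 ≤ s ∧ aR (s - p) (t - p)) ∨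
    (1 ≤ s ∧ s ≤ i ∧ s ≤ t ∧ t ≤ n)

section Main

variable {n i p j : ℕ} {a m aL mL aR mR : ℕ → ℕ → Prop}

/-- No `a`-relation crosses the gap above level `i`. -/
lemma crossA (hG : GoodPair n i (a, m)) (hp : i + 1 ≤ p)
    (htop : a (p+1) n) (hmin : ∀ t, i+1 ≤ t → t ≤ p → ¬ a t n) :
    ∀ s t, a s t → s ≤ p → p + 1 ≤ t → s ≤ i := by
  intro s t hst hsp hpt
  by_contra hsi
  have h1 : a s (p+1) := hG.1.restr _ _ _ hst (by omega) hpt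
  have h2 : a s n := hG.1.trans _ _ _ h1 htop
  exact hmin s (by omega) hsp h2

lemma crossM (hG : GoodPair n i (a, m)) (hp : i + 1 ≤ p)
    (htop : a (p+1) n) (hmin : ∀ t, i+1 ≤ t → t ≤ p → ¬ a t n) :
    ∀ s t, m s t → s ≤ p → p + 1 ≤ t → False := by
  intro s t hst hsp hpt
  obtain ⟨b1, b2, b3⟩ := hG.2.1.bdd _ _ hst
  have hast : a s t := hG.2.2.1 s t s hst le_rfl b2
  have hsi : s ≤ i := crossA hG hp htop hmin s t hast hsp hpt
  have hai : a (i+1) t := hG.2.2.1 s t (i+1) hst (by omega) (by omega)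
  have := crossA hG hp htop hmin (i+1) t hai (by omega) hpt
  omega

lemma decompose_left (hG : GoodPair n i (a, m)) (hp : i + 1 ≤ p) (hpn : p ≤ n) :
    GoodPair p i (restrictTS p a, restrictTS p m) := by
  refine ⟨ts_restrict hG.1 hpn, ts_restrict hG.2.1 hpn, ?_, ?_⟩
  · rintro s t k ⟨htp, hst⟩ h1 h2
    exact ⟨htp, hG.2.2.1 s t k hst h1 h2⟩
  · intro k hk1 hk2
    exact ⟨le_rfl, hG.1.restr _ _ _ (hG.2.2.2 k hk1 hk2) (by omega) hpn⟩

lemma decompose_right (hG : GoodPair n i (a, m)) (hpj : p + j = n) (hj : 1 ≤ j)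
    (htop : a (p+1) n) :
    GoodPair j 1 (gfpTS p a, gfpTS p m) := by
  have e : n - p = j := by omega
  refine ⟨e ▸ ts_gfp hG.1, e ▸ ts_gfp hG.2.1, ?_, ?_⟩
  · rintro s t k ⟨h1, hst⟩ hk1 hk2
    exact ⟨by omega, hG.2.2.1 _ _ (k+p) hst (by omega) (by omega)⟩
  · intro k hk1 hk2
    have : k = 1 := by omega
    subst this
    exact ⟨le_rfl, by rw [show 1 + p = p + 1 by omega, show j + p = n by omega]; exact htop⟩

lemma decompose_a_eq (hG : GoodPair n i (a, m)) (hp : i + 1 ≤ p)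
    (htop : a (p+1) n) (hmin : ∀ t, i+1 ≤ t → t ≤ p → ¬ a t n) :
    a = glueA n p i (restrictTS p a) (gfpTS p a) := by
  funext s t
  apply propext
  constructor
  · intro hst
    obtain ⟨b1, b2, b3⟩ := hG.1.bdd _ _ hst
    rcases le_or_gt t p with htp | htp
    · exact Or.inl ⟨htp, htp, hst⟩
    · rcases le_or_gt s p with hsp | hsp
      · have hsi := crossA hG hp htop hmin s t hst hsp (by omega)
        exact Or.inr (Or.inr ⟨b1, hsi, b2, b3⟩)
      · refine Or.inr (Or.inl ⟨by omega, by omega, ?_⟩)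
        rw [show s - p + p = s by omega, show t - p + p = t by omega]
        exact hst
  · rintro (⟨htp, _, hst⟩ | ⟨hsp, h1, hst⟩ | ⟨h1, h2, h3, h4⟩)
    · exact hst
    · rw [show s - p + p = s by omega] at hst
      rcases le_or_gt p t with hpt | hpt
      · rwa [show t - p + p = t by omega] at hst
      · rw [show t - p + p = p by omega] at hst
        obtain ⟨_, b2, _⟩ := hG.1.bdd _ _ hst
        omega
    · exact hG.1.restr _ _ _ (hG.2.2.2 s h1 h2) h3 h4

lemma decompose_m_eq (hG : GoodPair n i (a, m)) (hp : i + 1 ≤ p)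
    (htop : a (p+1) n) (hmin : ∀ t, i+1 ≤ t → t ≤ p → ¬ a t n) :
    m = concatTS p (restrictTS p m) (gfpTS p m) := by
  funext s t
  apply propext
  constructor
  · intro hst
    obtain ⟨b1, b2, b3⟩ := hG.2.1.bdd _ _ hst
    rcases le_or_gt t p with htp | htp
    · exact Or.inl ⟨htp, htp, hst⟩
    · rcases le_or_gt s p with hsp | hsp
      · exact absurd hst (fun hst => crossM hG hp htop hmin s t hst hsp (by omega))
      · refine Or.inr ⟨by omega, by omega, ?_⟩
        rw [show s - p + p = s by omega, show t - p + p = t by omega]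
        exact hst
  · rintro (⟨htp, _, hst⟩ | ⟨hsp, h1, hst⟩)
    · exact hst
    · rw [show s - p + p = s by omega] at hst
      rcases le_or_gt p t with hpt | hpt
      · rwa [show t - p + p = t by omega] at hst
      · rw [show t - p + p = p by omega] at hst
        obtain ⟨_, b2, _⟩ := hG.2.1.bdd _ _ hst
        omega

end Main

section Glue

variable {n i p j : ℕ} {aL mL aR mR : ℕ → ℕ → Prop}

lemma glue_a_ts (hL : GoodPair p i (aL, mL)) (hR : GoodPair j 1 (aR, mR))
    (hp : i + 1 ≤ p) (hpj : p + j = n) (hj : 1 ≤ j) :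
    IsTransferSystem n (glueA n p i aL aR) := by
  have hTL : IsTransferSystem p aL := hL.1
  have hTR : IsTransferSystem j aR := hR.1
  have bdd : ∀ s t, glueA n p i aL aR s t → 1 ≤ s ∧ s ≤ t ∧ t ≤ n := by
    rintro s t (⟨htp, hst⟩ | ⟨hsp, hst⟩ | ⟨h1, h2, h3, h4⟩)
    · obtain ⟨b1, b2, b3⟩ := hTL.bdd _ _ hst
      exact ⟨b1, b2, by omega⟩
    · obtain ⟨b1, b2, b3⟩ := hTR.bdd _ _ hst
      exact ⟨by omega, by omega, by omega⟩
    · exact ⟨h1, h3, h4⟩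
  refine ⟨?_, ?_, bdd, ?_⟩
  · intro s h1 h2
    rcases le_or_gt s p with hsp | hsp
    · exact Or.inl ⟨hsp, hTL.refl s h1 hsp⟩
    · exact Or.inr (Or.inl ⟨by omega, hTR.refl (s - p) (by omega) (by omega)⟩)
  · rintro s t u (⟨htp, hst⟩ | ⟨hsp, hst⟩ | ⟨h1, h2, h3, h4⟩) htu
    · rcases htu with ⟨hup, htu⟩ | ⟨htp', htu⟩ | ⟨g1, g2, g3, g4⟩
      · exact Or.inl ⟨hup, hTL.trans _ _ _ hst htu⟩
      · omega
      · obtain ⟨b1, b2, b3⟩ := hTL.bdd _ _ hst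
        exact Or.inr (Or.inr ⟨b1, by omega, by omega, g4⟩)
    · have htgep : p + 1 ≤ t := by
        obtain ⟨b1, b2, b3⟩ := hTR.bdd _ _ hst
        omega
      rcases htu with ⟨hup, htu⟩ | ⟨htp', htu⟩ | ⟨g1, g2, g3, g4⟩
      · obtain ⟨c1, c2, c3⟩ := hTL.bdd _ _ htu
        omega
      · refine Or.inr (Or.inl ⟨hsp, hTR.trans _ _ _ hst ?_⟩)
        exact htu
      · omega
    · have h5 := bdd t u htu
      exact Or.inr (Or.inr ⟨h1, h2, by omega, by omega⟩)
  · rintro s t k (⟨htp, hst⟩ | ⟨hsp, hst⟩ | ⟨h1, h2, h3, h4⟩) hsk hkt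
    · exact Or.inl ⟨by omega, hTL.restr _ _ _ hst hsk (by omega)⟩
    · exact Or.inr (Or.inl ⟨hsp, hTR.restr _ _ _ hst (by omega) (by omega)⟩)
    · exact Or.inr (Or.inr ⟨h1, h2, hsk, by omega⟩)

lemma glue_m_ts (hL : GoodPair p i (aL, mL)) (hR : GoodPair j 1 (aR, mR))
    (hpj : p + j = n) :
    IsTransferSystem n (concatTS p mL mR) := by
  have hTL : IsTransferSystem p mL := hL.2.1
  have hTR : IsTransferSystem j mR := hR.2.1
  have bdd : ∀ s t, concatTS p mL mR s t → 1 ≤ s ∧ s ≤ t ∧ t ≤ n := by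
    rintro s t (⟨htp, hst⟩ | ⟨hsp, hst⟩)
    · obtain ⟨b1, b2, b3⟩ := hTL.bdd _ _ hst
      exact ⟨b1, b2, by omega⟩
    · obtain ⟨b1, b2, b3⟩ := hTR.bdd _ _ hst
      exact ⟨by omega, by omega, by omega⟩
  refine ⟨?_, ?_, bdd, ?_⟩
  · intro s h1 h2
    rcases le_or_gt s p with hsp | hsp
    · exact Or.inl ⟨hsp, hTL.refl s h1 hsp⟩
    · exact Or.inr ⟨by omega, hTR.refl (s - p) (by omega) (by omega)⟩
  · rintro s t u (⟨htp, hst⟩ | ⟨hsp, hst⟩) htu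
    · rcases htu with ⟨hup, htu⟩ | ⟨htp', htu⟩
      · exact Or.inl ⟨hup, hTL.trans _ _ _ hst htu⟩
      · omega
    · have htgep : p + 1 ≤ t := by
        obtain ⟨b1, b2, b3⟩ := hTR.bdd _ _ hst
        omega
      rcases htu with ⟨hup, htu⟩ | ⟨htp', htu⟩
      · obtain ⟨c1, c2, c3⟩ := hTL.bdd _ _ htu
        omega
      · exact Or.inr ⟨hsp, hTR.trans _ _ _ hst htu⟩
  · rintro s t k (⟨htp, hst⟩ | ⟨hsp, hst⟩) hsk hkt
    · exact Or.inl ⟨by omega, hTL.restr _ _ _ hst hsk (by omega)⟩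
    · exact Or.inr ⟨hsp, hTR.restr _ _ _ hst (by omega) (by omega)⟩

lemma glue_compat (hL : GoodPair p i (aL, mL)) (hR : GoodPair j 1 (aR, mR)) :
    Compatible (glueA n p i aL aR) (concatTS p mL mR) := by
  rintro s t k (⟨htp, hst⟩ | ⟨hsp, hst⟩) hsk hkt
  · exact Or.inl ⟨htp, hL.2.2.1 s t k hst hsk hkt⟩
  · exact Or.inr (Or.inl ⟨by omega, hR.2.2.1 (s - p) (t - p) (k - p) hst (by omega) (by omega)⟩)

lemma glue_good (hL : GoodPair p i (aL, mL)) (hR : GoodPair j 1 (aR, mR))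
    (hp : i + 1 ≤ p) (hpj : p + j = n) (hj : 1 ≤ j) :
    GoodPair n i (glueA n p i aL aR, concatTS p mL mR) := by
  refine ⟨glue_a_ts hL hR hp hpj hj, glue_m_ts hL hR hpj, glue_compat hL hR, ?_⟩
  intro k h1 h2
  exact Or.inr (Or.inr ⟨h1, h2, by omega, le_rfl⟩)

lemma glue_nomid (hL : GoodPair p i (aL, mL)) (hpj : p + j = n) (hj : 1 ≤ j) :
    ∀ t, i + 1 ≤ t → t ≤ p → ¬ glueA n p i aL aR t n := by
  rintro t h1 h2 (⟨htp, _⟩ | ⟨hsp, _⟩ | ⟨g1, g2, g3, g4⟩) <;> omega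

lemma glue_top (hR : GoodPair j 1 (aR, mR)) (hpj : p + j = n) (hj : 1 ≤ j) :
    glueA n p i aL aR (p + 1) n := by
  refine Or.inr (Or.inl ⟨le_rfl, ?_⟩)
  rw [show p + 1 - p = 1 by omega, show n - p = j by omega]
  exact hR.2.2.2 1 le_rfl le_rfl

lemma glue_restrict_a (hL : GoodPair p i (aL, mL)) (hR : GoodPair j 1 (aR, mR))
    (hp : i + 1 ≤ p) (hpj : p + j = n) (hj : 1 ≤ j) :
    restrictTS p (glueA n p i aL aR) = aL := by
  have hTL : IsTransferSystem p aL := hL.1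
  have hTR : IsTransferSystem j aR := hR.1
  funext s t
  apply propext
  constructor
  · rintro ⟨htp, (⟨_, hst⟩ | ⟨hsp, hst⟩ | ⟨g1, g2, g3, g4⟩)⟩
    · exact hst
    · obtain ⟨b1, b2, b3⟩ := hTR.bdd _ _ hst
      omega
    · exact hTL.restr _ _ _ (hL.2.2.2 s g1 g2) g3 (by omega)
  · intro hst
    obtain ⟨b1, b2, b3⟩ := hTL.bdd _ _ hst
    exact ⟨b3, Or.inl ⟨b3, hst⟩⟩

lemma glue_gfp_a (hL : GoodPair p i (aL, mL)) (hR : GoodPair j 1 (aR, mR))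
    (hp : i + 1 ≤ p) (hpj : p + j = n) (hj : 1 ≤ j) :
    gfpTS p (glueA n p i aL aR) = aR := by
  have hTL : IsTransferSystem p aL := hL.1
  have hTR : IsTransferSystem j aR := hR.1
  funext s t
  apply propext
  constructor
  · rintro ⟨h1, (⟨htp, hst⟩ | ⟨hsp, hst⟩ | ⟨g1, g2, g3, g4⟩)⟩
    · obtain ⟨b1, b2, b3⟩ := hTL.bdd _ _ hst
      omega
    · rwa [show s + p - p = s by omega, show t + p - p = t by omega] at hst
    · omega
  · intro hst
    obtain ⟨b1, b2, b3⟩ := hTR.bdd _ _ hst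
    refine ⟨b1, Or.inr (Or.inl ⟨by omega, ?_⟩)⟩
    rwa [show s + p - p = s by omega, show t + p - p = t by omega]

lemma glue_restrict_m (hL : GoodPair p i (aL, mL)) (hR : GoodPair j 1 (aR, mR)) :
    restrictTS p (concatTS p mL mR) = mL := by
  have hTL : IsTransferSystem p mL := hL.2.1
  have hTR : IsTransferSystem j mR := hR.2.1
  funext s t
  apply propext
  constructor
  · rintro ⟨htp, (⟨_, hst⟩ | ⟨hsp, hst⟩)⟩
    · exact hst
    · obtain ⟨b1, b2, b3⟩ := hTR.bdd _ _ hst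
      omega
  · intro hst
    obtain ⟨b1, b2, b3⟩ := hTL.bdd _ _ hst
    exact ⟨b3, Or.inl ⟨b3, hst⟩⟩

lemma glue_gfp_m (hL : GoodPair p i (aL, mL)) (hR : GoodPair j 1 (aR, mR)) :
    gfpTS p (concatTS p mL mR) = mR := by
  have hTL : IsTransferSystem p mL := hL.2.1
  have hTR : IsTransferSystem j mR := hR.2.1
  funext s t
  apply propext
  constructor
  · rintro ⟨h1, (⟨htp, hst⟩ | ⟨hsp, hst⟩)⟩
    · obtain ⟨b1, b2, b3⟩ := hTL.bdd _ _ hst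
      omega
    · rwa [show s + p - p = s by omega, show t + p - p = t by omega] at hst
  · intro hst
    obtain ⟨b1, b2, b3⟩ := hTR.bdd _ _ hst
    refine ⟨b1, Or.inr ⟨by omega, ?_⟩⟩
    rwa [show s + p - p = s by omega, show t + p - p = t by omega]

end Glue

/-! ### The counting argument -/

section Count

open Classical in
/-- The least `t ≥ i+1` with `t →_{O_a} n`. -/
noncomputable def qval (n i : ℕ) (h : i + 1 ≤ n)
    (x : {p : (ℕ → ℕ → Prop) × (ℕ → ℕ → Prop) // GoodPair n i p ∧ ¬ p.1 (i+1) n}) : ℕ :=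
  Nat.find (p := fun t => i + 1 ≤ t ∧ x.1.1 t n)
    ⟨n, h, x.2.1.1.refl n (by omega) le_rfl⟩

open Classical in
lemma qval_spec (n i : ℕ) (h : i + 1 ≤ n) (x) :
    i + 1 ≤ qval n i h x ∧ x.1.1 (qval n i h x) n := by
  unfold qval
  exact Nat.find_spec (p := fun t => i + 1 ≤ t ∧ x.1.1 t n)
    ⟨n, h, x.2.1.1.refl n (by omega) le_rfl⟩

open Classical in
lemma qval_min (n i : ℕ) (h : i + 1 ≤ n) (x) :
    ∀ t, t < qval n i h x → ¬ (i + 1 ≤ t ∧ x.1.1 t n) := by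
  intro t ht hc
  have hle : qval n i h x ≤ t := by
    unfold qval
    exact Nat.find_min' _ hc
  omega

open Classical in
lemma qval_le (n i : ℕ) (h : i + 1 ≤ n) (x) : qval n i h x ≤ n := by
  unfold qval
  exact Nat.find_min' _ ⟨h, x.2.1.1.refl n (by omega) le_rfl⟩

lemma qval_ge (n i : ℕ) (h : i + 1 ≤ n) (x) : i + 2 ≤ qval n i h x := by
  have hs := qval_spec n i h x
  by_contra hlt
  have he : qval n i h x = i + 1 := by omega
  rw [he] at hs
  exact x.2.2 hs.2

lemma qval_range (n i : ℕ) (h : i + 1 ≤ n) (x) :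
    1 ≤ n - (qval n i h x - 1) ∧ n - (qval n i h x - 1) ≤ n - i - 1 := by
  have h3 := qval_le n i h x
  have h4 := qval_ge n i h x
  omega

lemma card_fiber (n i : ℕ) (h : i + 1 ≤ n) (j : ℕ) (hj1 : 1 ≤ j) (hj2 : j ≤ n - i - 1) :
    Nat.card {x : {p : (ℕ → ℕ → Prop) × (ℕ → ℕ → Prop) //
        GoodPair n i p ∧ ¬ p.1 (i+1) n} // n - (qval n i h x - 1) = j} =
      Nat.card {q // GoodPair (n - j) i q} * Nat.card {q // GoodPair j 1 q} := by
  rw [← Nat.card_prod]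
  apply Nat.card_congr
  set p := n - j with hpdef
  have hp : i + 1 ≤ p := by omega
  have hpj : p + j = n := by omega
  -- facts about elements of the fiber
  have key : ∀ x (_ : n - (qval n i h x - 1) = j),
      x.1.1 (p + 1) n ∧ (∀ t, i + 1 ≤ t → t ≤ p → ¬ x.1.1 t n) := by
    intro x hx
    have h1 := qval_spec n i h x
    have h2 := qval_min n i h x
    have h3 := qval_le n i h x
    have h4 := qval_ge n i h x
    have hq : qval n i h x = p + 1 := by omega
    rw [hq] at h1 h2
    exact ⟨h1.2, fun t ht1 ht2 hat => h2 t (by omega) ⟨ht1, hat⟩⟩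
  refine Equiv.mk
    (fun x => (⟨(restrictTS p x.1.1.1, restrictTS p x.1.1.2), ?_⟩,
               ⟨(gfpTS p x.1.1.1, gfpTS p x.1.1.2), ?_⟩))
    (fun y => ⟨⟨(glueA n p i y.1.1.1 y.2.1.1, concatTS p y.1.1.2 y.2.1.2), ?_, ?_⟩, ?_⟩)
    ?_ ?_
  · exact decompose_left x.1.2.1 hp (by omega)
  · exact decompose_right x.1.2.1 hpj hj1 (key x x.2).1
  · exact glue_good
      (show GoodPair p i (y.1.1.1, y.1.1.2) from y.1.2)
      (show GoodPair j 1 (y.2.1.1, y.2.1.2) from y.2.2) hp hpj hj1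
  · exact glue_nomid (aR := y.2.1.1)
      (show GoodPair p i (y.1.1.1, y.1.1.2) from y.1.2) hpj hj1 (i+1) le_rfl hp
  · -- fiber condition: qval = p + 1
    have hgL : GoodPair p i (y.1.1.1, y.1.1.2) := y.1.2
    have hgR : GoodPair j 1 (y.2.1.1, y.2.1.2) := y.2.2
    set x : {pp : (ℕ → ℕ → Prop) × (ℕ → ℕ → Prop) // GoodPair n i pp ∧ ¬ pp.1 (i+1) n} :=
      ⟨(glueA n p i y.1.1.1 y.2.1.1, concatTS p y.1.1.2 y.2.1.2),
        glue_good hgL hgR hp hpj hj1,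
        glue_nomid (aR := y.2.1.1) hgL hpj hj1 (i+1) le_rfl hp⟩ with hxdef
    have h1 := qval_spec n i h x
    have h2 := qval_min n i h x
    have h3 := qval_le n i h x
    have h4 := qval_ge n i h x
    have htop : x.1.1 (p + 1) n := glue_top hgR hpj hj1
    have hnomid := glue_nomid (aR := y.2.1.1) hgL hpj hj1
    have hq : qval n i h x = p + 1 := by
      rcases lt_trichotomy (qval n i h x) (p + 1) with hlt | heq | hgt
      · exact absurd h1.2 (hnomid _ h1.1 (by omega))
      · exact heq
      · exact absurd ⟨by omega, htop⟩ (h2 (p+1) hgt)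
    rw [hq]
    omega
  · -- left inverse
    intro x
    apply Subtype.ext
    apply Subtype.ext
    have hk := key x x.2
    have ha := decompose_a_eq x.1.2.1 hp hk.1 hk.2
    have hm := decompose_m_eq x.1.2.1 hp hk.1 hk.2
    exact Prod.ext ha.symm hm.symm
  · -- right inverse
    intro y
    have hgL : GoodPair p i (y.1.1.1, y.1.1.2) := y.1.2
    have hgR : GoodPair j 1 (y.2.1.1, y.2.1.2) := y.2.2
    apply Prod.ext
    · apply Subtype.ext
      exact Prod.ext (glue_restrict_a hgL hgR hp hpj hj1) (glue_restrict_m hgL hgR)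
    · apply Subtype.ext
      exact Prod.ext (glue_gfp_a hgL hgR hp hpj hj1) (glue_gfp_m hgL hgR)

lemma card_T' (n i : ℕ) (h : i + 1 ≤ n) :
    Nat.card {p : (ℕ → ℕ → Prop) × (ℕ → ℕ → Prop) //
        GoodPair n i p ∧ ¬ p.1 (i+1) n} =
      ∑ j ∈ Finset.Icc 1 (n - i - 1),
        Nat.card {q // GoodPair (n - j) i q} * Nat.card {q // GoodPair j 1 q} := by
  classical
  haveI : Finite {p : (ℕ → ℕ → Prop) × (ℕ → ℕ → Prop) //
      GoodPair n i p ∧ ¬ p.1 (i+1) n} :=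
    finite_pairs n _ (fun p hp => ⟨hp.1.1, hp.1.2.1⟩)
  haveI := Fintype.ofFinite {p : (ℕ → ℕ → Prop) × (ℕ → ℕ → Prop) //
      GoodPair n i p ∧ ¬ p.1 (i+1) n}
  rw [Nat.card_eq_fintype_card, ← Finset.card_univ]
  have hmem : ∀ x : {p : (ℕ → ℕ → Prop) × (ℕ → ℕ → Prop) //
      GoodPair n i p ∧ ¬ p.1 (i+1) n}, x ∈ Finset.univ →
      (n - (qval n i h x - 1)) ∈ Finset.Icc 1 (n - i - 1) := by
    intro x _
    rw [Finset.mem_Icc]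
    exact qval_range n i h x
  rw [Finset.card_eq_sum_card_fiberwise hmem]
  apply Finset.sum_congr rfl
  intro j hj
  rw [Finset.mem_Icc] at hj
  rw [← card_fiber n i h j hj.1 hj.2, Nat.card_eq_fintype_card, Fintype.card_subtype]

end Count

/-- For all `0 ≤ i ≤ n - 1`, the counts `d(n, i)` satisfy
`d(n, i) = d(n, i+1) + Σ_{j=1}^{n-i-1} d(n-j, i) · d(j, 1)`. -/
theorem dCount_recurrence (n i : ℕ) (h : i + 1 ≤ n) :
    dCount n i =
      dCount n (i + 1) + ∑ j ∈ Finset.Icc 1 (n - i - 1), dCount (n - j) i * dCount j 1 := by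
  rw [dCount_eq_card n i (by omega), card_split n i, card_T' n i h,
    dCount_eq_card n (i+1) h]
  congr 1
  apply Finset.sum_congr rfl
  intro j hj
  rw [Finset.mem_Icc] at hj
  rw [dCount_eq_card (n - j) i (by omega), dCount_eq_card j 1 (by omega)]
end

section
/- For every n ≥ 1, the Fuss–Catalan identity A_n(3, 2) = Σ_{j=1}^{n} A_{j+1}(2, 1) · A_{n−j}(3, j) holds (as an identity of rational numbers). -/
/-- The Fuss–Catalan number `A_n(p, r) = (r/(np+r)) · C(np+r, n)`, as a rational number. -/
def fussCatalan (n p r : ℕ) : ℚ :=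
  (r : ℚ) / (n * p + r) * (Nat.choose (n * p + r) n : ℚ)

lemma fc_zero_r (n p : ℕ) : fussCatalan n p 0 = 0 := by
  simp [fussCatalan]

lemma fc_zero_n (p r : ℕ) (hr : 1 ≤ r) : fussCatalan 0 p r = 1 := by
  have h : (r : ℚ) ≠ 0 := by
    have : 0 < r := hr
    exact_mod_cast this.ne'
  simp [fussCatalan, div_self h]

lemma rec3 (m r : ℕ) :
    fussCatalan (m+1) 3 (r+1) = fussCatalan (m+1) 3 r + fussCatalan m 3 (r+3) := by
  unfold fussCatalan
  rw [show (m+1)*3 + (r+1) = (3*m+3+r)+1 from by ring,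
      show (m+1)*3 + r = 3*m+3+r from by ring,
      show m*3 + (r+3) = 3*m+3+r from by ring]
  have h1 : (((3*m+3+r)+1).choose (m+1) : ℚ)
      = ((3*m+3+r).choose m : ℚ) + ((3*m+3+r).choose (m+1) : ℚ) := by
    exact_mod_cast Nat.choose_succ_succ (3*m+3+r) m
  have h2 : ((3*m+3+r).choose (m+1) : ℚ) * (m+1)
      = ((3*m+3+r).choose m : ℚ) * (2*m+3+r) := by
    have h := Nat.choose_succ_right_eq (3*m+3+r) m
    rw [show 3*m+3+r - m = 2*m+3+r from by omega] at h
    exact_mod_cast h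
  have hm : ((m:ℚ)+1) ≠ 0 := by positivity
  have hC : ((3*m+3+r).choose (m+1) : ℚ)
      = ((3*m+3+r).choose m : ℚ) * (2*m+3+r) / (m+1) := by
    field_simp
    linear_combination h2
  rw [h1, hC]
  push_cast
  have d1 : ((m:ℚ)+1)*3 + ((r:ℚ)+1) ≠ 0 := by positivity
  have d2 : ((m:ℚ)+1)*3 + (r:ℚ) ≠ 0 := by positivity
  have d3 : ((m:ℚ))*3 + ((r:ℚ)+3) ≠ 0 := by positivity
  field_simp
  ring

lemma rec2 (k r : ℕ) :
    fussCatalan (k+1) 2 (r+1) = fussCatalan (k+1) 2 r + fussCatalan k 2 (r+2) := by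
  unfold fussCatalan
  rw [show (k+1)*2 + (r+1) = (2*k+2+r)+1 from by ring,
      show (k+1)*2 + r = 2*k+2+r from by ring,
      show k*2 + (r+2) = 2*k+2+r from by ring]
  have h1 : (((2*k+2+r)+1).choose (k+1) : ℚ)
      = ((2*k+2+r).choose k : ℚ) + ((2*k+2+r).choose (k+1) : ℚ) := by
    exact_mod_cast Nat.choose_succ_succ (2*k+2+r) k
  have h2 : ((2*k+2+r).choose (k+1) : ℚ) * (k+1)
      = ((2*k+2+r).choose k : ℚ) * (k+2+r) := by
    have h := Nat.choose_succ_right_eq (2*k+2+r) k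
    rw [show 2*k+2+r - k = k+2+r from by omega] at h
    exact_mod_cast h
  have hm : ((k:ℚ)+1) ≠ 0 := by positivity
  have hC : ((2*k+2+r).choose (k+1) : ℚ)
      = ((2*k+2+r).choose k : ℚ) * (k+2+r) / (k+1) := by
    field_simp
    linear_combination h2
  rw [h1, hC]
  push_cast
  have d1 : ((k:ℚ)+1)*2 + ((r:ℚ)+1) ≠ 0 := by positivity
  have d2 : ((k:ℚ)+1)*2 + (r:ℚ) ≠ 0 := by positivity
  have d3 : ((k:ℚ))*2 + ((r:ℚ)+2) ≠ 0 := by positivity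
  field_simp
  ring

lemma cat_shift (k : ℕ) : fussCatalan (k+1) 2 1 = fussCatalan k 2 2 := by
  unfold fussCatalan
  rw [show (k+1)*2 + 1 = (2*k+2)+1 from by ring,
      show k*2 + 2 = 2*k+2 from by ring]
  have h1 : (((2*k+2)+1).choose (k+1) : ℚ)
      = ((2*k+2).choose k : ℚ) + ((2*k+2).choose (k+1) : ℚ) := by
    exact_mod_cast Nat.choose_succ_succ (2*k+2) k
  have h2 : ((2*k+2).choose (k+1) : ℚ) * (k+1)
      = ((2*k+2).choose k : ℚ) * (k+2) := by
    have h := Nat.choose_succ_right_eq (2*k+2) k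
    rw [show 2*k+2 - k = k+2 from by omega] at h
    exact_mod_cast h
  have hm : ((k:ℚ)+1) ≠ 0 := by positivity
  have hC : ((2*k+2).choose (k+1) : ℚ)
      = ((2*k+2).choose k : ℚ) * (k+2) / (k+1) := by
    field_simp
    linear_combination h2
  rw [h1, hC]
  push_cast
  have d1 : ((k:ℚ)+1)*2 + 1 ≠ 0 := by positivity
  have d2 : ((k:ℚ))*2 + 2 ≠ 0 := by positivity
  field_simp
  ring

lemma norm_sum (m s : ℕ) (t : ℕ) :
    ∑ k ∈ Finset.range (m+2), fussCatalan k 2 t * fussCatalan (m+1-k) 3 (k+s)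
      = (∑ i ∈ Finset.range (m+1),
          fussCatalan (i+1) 2 t * fussCatalan (m-i) 3 (i+(s+1)))
        + fussCatalan 0 2 t * fussCatalan (m+1) 3 s := by
  rw [Finset.sum_range_succ']
  congr 1
  · refine Finset.sum_congr rfl fun i _ => ?_
    congr 2 <;> omega
  · congr 2; omega

lemma main_conv (n : ℕ) : ∀ r s : ℕ, 1 ≤ r → (1 ≤ s ∨ 1 ≤ n) →
    ∑ k ∈ Finset.range (n+1), fussCatalan k 2 r * fussCatalan (n-k) 3 (k+s)
      = fussCatalan n 3 (r+s) := by
  induction n using Nat.strong_induction_on with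
  | _ n ih =>
  intro r s hr hs
  rcases n with _ | m
  · have hs1 : 1 ≤ s := by omega
    rw [Finset.sum_range_one]
    rw [fc_zero_n 2 r hr]
    rw [show (0:ℕ) - 0 = 0 from rfl, show (0:ℕ) + s = s from by omega]
    rw [fc_zero_n 3 s hs1, fc_zero_n 3 (r+s) (by omega)]
    norm_num
  · clear hs
    induction r with
    | zero => omega
    | succ r ihr =>
      rw [norm_sum m s]
      rcases Nat.eq_zero_or_pos r with rfl | hr1
      · -- base case r + 1 = 1
        have key : ∀ i ∈ Finset.range (m+1),
            fussCatalan (i+1) 2 1 * fussCatalan (m-i) 3 (i+(s+1))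
              = fussCatalan i 2 2 * fussCatalan (m-i) 3 (i+(s+1)) := by
          intro i _
          rw [cat_shift]
        rw [Finset.sum_congr rfl key,
            ih m (by omega) 2 (s+1) (by omega) (Or.inl (by omega))]
        rw [fc_zero_n 2 1 (by omega), one_mul]
        rw [show 2 + (s+1) = s + 3 from by omega, show 0 + 1 + s = s + 1 from by omega]
        rw [rec3 m s]
        ring
      · -- inductive step in r
        have key : ∀ i ∈ Finset.range (m+1),
            fussCatalan (i+1) 2 (r+1) * fussCatalan (m-i) 3 (i+(s+1))
              = fussCatalan (i+1) 2 r * fussCatalan (m-i) 3 (i+(s+1))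
                + fussCatalan i 2 (r+2) * fussCatalan (m-i) 3 (i+(s+1)) := by
          intro i _
          rw [rec2 i r, add_mul]
        rw [Finset.sum_congr rfl key, Finset.sum_add_distrib]
        have hfull := ihr hr1
        rw [norm_sum m s r] at hfull
        have h2 := ih m (by omega) (r+2) (s+1) (by omega) (Or.inl (by omega))
        rw [h2]
        rw [fc_zero_n 2 (r+1) (by omega), fc_zero_n 2 r hr1, one_mul] at *
        rw [show r + 2 + (s+1) = (r+s) + 3 from by omega,
            show r + 1 + s = (r+s) + 1 from by omega]
        rw [rec3 m (r+s)]
        linarith [hfull]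

/-- `A_n(3, 2) = Σ_{j=1}^{n} A_{j+1}(2, 1) · A_{n-j}(3, j)` for `n ≥ 1`. -/
theorem fussCatalan_identity (n : ℕ) (hn : 1 ≤ n) :
    fussCatalan n 3 2 =
      ∑ j ∈ Finset.Icc 1 n, fussCatalan (j + 1) 2 1 * fussCatalan (n - j) 3 j := by
  rcases n with _ | m
  · omega
  · have h := main_conv (m+1) 2 0 (by omega) (Or.inr (by omega))
    rw [norm_sum m 0 2] at h
    rw [fc_zero_r (m+1) 3, mul_zero, add_zero] at h
    rw [← Finset.Ico_add_one_right_eq_Icc, Finset.sum_Ico_eq_sum_range]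
    rw [show m + 1 + 1 - 1 = m + 1 from by omega]
    have key : ∀ i ∈ Finset.range (m+1),
        fussCatalan (1 + i + 1) 2 1 * fussCatalan (m + 1 - (1 + i)) 3 (1 + i)
          = fussCatalan (i+1) 2 2 * fussCatalan (m-i) 3 (i+(0+1)) := by
      intro i _
      rw [show 1 + i + 1 = (1 + i) + 1 from rfl, cat_shift (1+i)]
      congr 2 <;> omega
    rw [Finset.sum_congr rfl key, h]
end
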